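/- arXiv:2603.06844 — 7 statements merged into one kernel-verified Lean document; each statement's English description precedes it below -/
import Mathlib

section
/- Let R be a d-dimensional Noetherian local ring and let 𝓘 = {I_n} be a graded family of m_R-primary ideals (I_0 = R, I_m I_n ⊆ I_{m+n}, I_m m_R-primary for m > 0). Then the limit lim_{p→∞} e(I_p)/p^d exists (as a nonnegative real number), where e(I) denotes the Hilbert–Samuel multiplicity of the m_R-primary ideal I. -/
set_option maxHeartbeats 1000000
open Filter IsLocalRing Topology

namespace CutAux
open Order
section S1


section Height

variable {A B : Type*} [PartialOrder A] [PartialOrder B]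

lemma length_le_height_sum : ∀ (p : LTSeries (A × B)),
    (p.length : ℕ∞) ≤ height p.last.1 + height p.last.2 := by
  suffices H : ∀ (n : ℕ) (p : LTSeries (A × B)), p.length = n →
      (p.length : ℕ∞) ≤ height p.last.1 + height p.last.2 by
    intro p; exact H p.length p rfl
  intro n
  induction n with
  | zero => intro p hn; rw [hn]; simp
  | succ n ih =>
    intro p hn
    have hne : p.length ≠ 0 := by omega
    have hlt : p.eraseLast.last < p.last := p.eraseLast_last_rel_last hne
    have hlen : p.eraseLast.length = n := by simp [RelSeries.eraseLast_length, hn]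
    have IH := ih p.eraseLast hlen
    rw [hlen] at IH
    have key : height p.eraseLast.last.1 + height p.eraseLast.last.2 + 1
        ≤ height p.last.1 + height p.last.2 := by
      rcases Prod.lt_iff.mp hlt with ⟨h1, h2⟩ | ⟨h1, h2⟩
      · by_cases htop : height p.last.1 = ⊤
        · rw [htop, top_add]; exact le_top
        · have hfin : height p.eraseLast.last.1 < ⊤ :=
            lt_of_le_of_lt (height_mono h1.le) (lt_top_iff_ne_top.mpr htop)
          have hstrict := height_strictMono h1 hfin
          have h1' : height p.eraseLast.last.1 + 1 ≤ height p.last.1 :=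
            Order.add_one_le_of_lt hstrict
          calc height p.eraseLast.last.1 + height p.eraseLast.last.2 + 1
              = (height p.eraseLast.last.1 + 1) + height p.eraseLast.last.2 := by ring
            _ ≤ height p.last.1 + height p.last.2 := add_le_add h1' (height_mono h2)
      · by_cases htop : height p.last.2 = ⊤
        · rw [htop, add_top]; exact le_top
        · have hfin : height p.eraseLast.last.2 < ⊤ :=
            lt_of_le_of_lt (height_mono h2.le) (lt_top_iff_ne_top.mpr htop)
          have h2' : height p.eraseLast.last.2 + 1 ≤ height p.last.2 :=
            Order.add_one_le_of_lt (height_strictMono h2 hfin)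
          calc height p.eraseLast.last.1 + height p.eraseLast.last.2 + 1
              = height p.eraseLast.last.1 + (height p.eraseLast.last.2 + 1) := by ring
            _ ≤ height p.last.1 + height p.last.2 := add_le_add (height_mono h1) h2'
    rw [hn]
    calc ((n+1 : ℕ) : ℕ∞) = (n : ℕ∞) + 1 := by push_cast; rfl
      _ ≤ height p.eraseLast.last.1 + height p.eraseLast.last.2 + 1 := by
          exact add_le_add_left IH 1
      _ ≤ _ := key

lemma height_prod_le (x : A × B) : height x ≤ height x.1 + height x.2 := by
  rw [height_le_iff']
  intro p hp
  simpa [hp] using length_le_height_sum p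

lemma krullDim_prod_le [Nonempty A] [Nonempty B] :
    krullDim (A × B) ≤ krullDim A + krullDim B := by
  rw [krullDim_eq_iSup_height_of_nonempty, krullDim_eq_iSup_height_of_nonempty,
    krullDim_eq_iSup_height_of_nonempty, ← WithBot.coe_add, WithBot.coe_le_coe]
  apply iSup_le
  intro x
  exact (height_prod_le x).trans
    (add_le_add (le_iSup (fun a => height a) x.1) (le_iSup (fun a => height a) x.2))

end Height

section Len

variable {R : Type*} [CommRing R]

noncomputable def len (R M : Type*) [CommRing R] [AddCommGroup M] [Module R M] : ℕ∞ :=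
  WithBot.unbotD 0 (Order.krullDim (Submodule R M))

variable {M N : Type*} [AddCommGroup M] [Module R M] [AddCommGroup N] [Module R N]

lemma coe_len (R M : Type*) [CommRing R] [AddCommGroup M] [Module R M] :
    (len R M : WithBot ℕ∞) = Order.krullDim (Submodule R M) := by
  have h : Order.krullDim (Submodule R M) ≠ ⊥ := by
    intro e
    have := krullDim_nonneg (α := Submodule R M)
    rw [e] at this
    simp at this
  obtain ⟨x, hx⟩ := WithBot.ne_bot_iff_exists.mp h
  rw [len, ← hx, WithBot.unbotD_coe]

lemma len_le_of_surjective (f : M →ₗ[R] N) (hf : Function.Surjective f) :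
    len R N ≤ len R M := by
  have := krullDim_le_of_strictMono _ (Submodule.comap_strictMono_of_surjective hf)
  rw [← coe_len, ← coe_len] at this
  exact_mod_cast this

lemma len_le_of_injective (f : M →ₗ[R] N) (hf : Function.Injective f) :
    len R M ≤ len R N := by
  have := krullDim_le_of_strictMono _ (Submodule.map_strictMono_of_injective hf)
  rw [← coe_len, ← coe_len] at this
  exact_mod_cast this

lemma len_eq_of_equiv (e : M ≃ₗ[R] N) : len R M = len R N :=
  le_antisymm (len_le_of_injective e.toLinearMap e.injective)
    (len_le_of_surjective e.toLinearMap e.surjective)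

lemma len_add_le (P : Submodule R M) : len R M ≤ len R P + len R (M ⧸ P) := by
  set f : Submodule R M → Submodule R P × Submodule R (M ⧸ P) :=
    fun s => (s.comap P.subtype, s.map P.mkQ) with hf
  have hsm : StrictMono f := by
    intro s t hst
    refine lt_of_le_of_ne
      ⟨Submodule.comap_mono hst.le, Submodule.map_mono hst.le⟩ (fun he => hst.ne ?_)
    have he1 : s.comap P.subtype = t.comap P.subtype := congrArg Prod.fst he
    have he2 : s.map P.mkQ = t.map P.mkQ := congrArg Prod.snd he
    refine le_antisymm hst.le (fun x hxt => ?_)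
    have hmk : P.mkQ x ∈ s.map P.mkQ := by
      rw [he2]; exact ⟨x, hxt, rfl⟩
    obtain ⟨y, hy, hxy⟩ := hmk
    have hsub : x - y ∈ P := by
      rw [← Submodule.Quotient.eq]
      exact hxy.symm
    have hsubt : x - y ∈ t := sub_mem hxt (hst.le hy)
    have : (⟨x - y, hsub⟩ : P) ∈ t.comap P.subtype := hsubt
    rw [← he1] at this
    have hxs : x - y ∈ s := this
    have := add_mem hy hxs
    simpa using this
  have h1 := krullDim_le_of_strictMono f hsm
  have h2 := krullDim_prod_le (A := Submodule R P) (B := Submodule R (M ⧸ P))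
  have h3 := h1.trans h2
  rw [← coe_len, ← coe_len, ← coe_len, ← WithBot.coe_add] at h3
  exact_mod_cast h3

lemma len_subsingleton (h : Subsingleton M) : len R M = 0 := by
  have : Unique (Submodule R M) := ⟨⟨⊥⟩, fun s => by
    ext x
    simp [Subsingleton.elim x 0]⟩
  have := krullDim_eq_zero_of_unique (α := Submodule R M)
  have h2 := coe_len R M
  rw [this] at h2
  exact_mod_cast h2

end Len


end S1
section S2
variable {R : Type*} [CommRing R]
variable {M N : Type*} [AddCommGroup M] [Module R M] [AddCommGroup N] [Module R N]

variable {R : Type*} [CommRing R]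
variable {M N : Type*} [AddCommGroup M] [Module R M] [AddCommGroup N] [Module R N]

lemma len_cyclic_le (Q : Ideal R) (m : M) (hspan : Submodule.span R {m} = ⊤)
    (hann : ∀ q ∈ Q, ∀ x : M, q • x = 0) : len R M ≤ len R (R ⧸ Q) := by
  have hker : Q ≤ LinearMap.ker (LinearMap.toSpanSingleton R M m) := by
    intro q hq
    simp only [LinearMap.mem_ker, LinearMap.toSpanSingleton_apply]
    exact hann q hq m
  refine len_le_of_surjective (Submodule.liftQ Q (LinearMap.toSpanSingleton R M m) hker) ?_
  rw [← LinearMap.range_eq_top, Submodule.range_liftQ, ← LinearMap.span_singleton_eq_range, hspan]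

lemma len_le_gen_mul (Q : Ideal R) :
    ∀ (g : ℕ) (M : Type _) [AddCommGroup M] [Module R M] (v : Fin g → M),
      Submodule.span R (Set.range v) = ⊤ → (∀ q ∈ Q, ∀ x : M, q • x = 0) →
      len R M ≤ (g : ℕ∞) * len R (R ⧸ Q) := by
  intro g
  induction g with
  | zero =>
    intro M _ _ v hv _
    have : Subsingleton M := by
      constructor
      intro a b
      have ha : a ∈ Submodule.span R (Set.range v) := by rw [hv]; trivial
      have hb : b ∈ Submodule.span R (Set.range v) := by rw [hv]; trivial
      rw [Set.range_eq_empty, Submodule.span_empty] at ha hb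
      rw [Submodule.mem_bot] at ha hb
      rw [ha, hb]
    rw [len_subsingleton this]
    simp
  | succ g ih =>
    intro M _ _ v hv hann
    set P : Submodule R M := Submodule.span R {v 0} with hP
    have h1 : len R M ≤ len R P + len R (M ⧸ P) := len_add_le P
    have h2 : len R P ≤ len R (R ⧸ Q) := by
      refine len_cyclic_le Q ⟨v 0, Submodule.mem_span_singleton_self _⟩ ?_ ?_
      · rw [eq_top_iff]
        rintro ⟨y, hy⟩ -
        obtain ⟨r, hr⟩ := Submodule.mem_span_singleton.mp hy
        exact Submodule.mem_span_singleton.mpr ⟨r, Subtype.ext (by simpa using hr)⟩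
      · intro q hq x
        ext
        simpa using hann q hq x.1
    have h3 : len R (M ⧸ P) ≤ (g : ℕ∞) * len R (R ⧸ Q) := by
      refine ih (M ⧸ P) (fun i => P.mkQ (v i.succ)) ?_ ?_
      · have htop : Submodule.span R (Set.range (P.mkQ ∘ v)) = ⊤ := by
          rw [Set.range_comp, ← Submodule.map_span, hv, Submodule.map_top, Submodule.range_mkQ]
        rw [eq_top_iff, ← htop]
        rw [Submodule.span_le]
        rintro - ⟨i, rfl⟩
        refine Fin.cases ?_ ?_ i
        · have : P.mkQ (v 0) = 0 := by
            rw [Submodule.mkQ_apply, Submodule.Quotient.mk_eq_zero]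
            exact Submodule.mem_span_singleton_self _
          rw [Function.comp_apply, this]
          exact Submodule.zero_mem _
        · intro j
          exact Submodule.subset_span ⟨j, rfl⟩
      · intro q hq z
        obtain ⟨y, rfl⟩ := P.mkQ_surjective z
        rw [← map_smul, hann q hq y, map_zero]
    calc len R M ≤ len R (R ⧸ Q) + (g : ℕ∞) * len R (R ⧸ Q) := h1.trans (add_le_add h2 h3)
      _ = ((g + 1 : ℕ) : ℕ∞) * len R (R ⧸ Q) := by push_cast; ring

lemma len_le_one_of_simple (h : IsSimpleOrder (Submodule R M)) : len R M ≤ 1 := by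
  have hk : Order.krullDim (Submodule R M) ≤ 1 := by
    apply iSup_le
    intro p
    have hlen : p.length ≤ 1 := by
      by_contra hc
      push_neg at hc
      have h01 : p ⟨0, by omega⟩ < p ⟨1, by omega⟩ := p.strictMono (by simp [Fin.lt_def])
      have h12 : p ⟨1, by omega⟩ < p ⟨2, by omega⟩ := p.strictMono (by simp [Fin.lt_def])
      rcases h.eq_bot_or_eq_top (p ⟨1, by omega⟩) with he | he
      · rw [he] at h01; exact not_lt_bot h01
      · rw [he] at h12; exact not_top_lt h12
    exact_mod_cast hlen
  rw [← coe_len] at hk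
  exact_mod_cast hk


end S2
section S3
variable {R : Type*} [CommRing R]
variable {M : Type*} [AddCommGroup M] [Module R M]

variable {R : Type*} [CommRing R]
variable {M : Type*} [AddCommGroup M] [Module R M]

/-- monomials of degree j in the x's -/
def monSet {g : ℕ} (x : Fin g → R) (j : ℕ) : Set R :=
  (fun α : Fin g → ℕ => ∏ i, x i ^ α i) '' ↑(Finset.Nat.antidiagonalTuple g j)

lemma prod_pow_single {g : ℕ} (x : Fin g → R) (i : Fin g) :
    ∏ k, x k ^ (Pi.single (M := fun _ => ℕ) i 1) k = x i := by
  rw [Finset.prod_eq_single i]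
  · simp
  · intro b _ hb; rw [Pi.single_eq_of_ne hb]; simp
  · simp

lemma sum_single_one {g : ℕ} (i : Fin g) :
    ∑ k, (Pi.single (M := fun _ => ℕ) i 1) k = 1 := by
  rw [Finset.sum_eq_single i]
  · simp
  · intro b _ hb; rw [Pi.single_eq_of_ne hb]
  · simp

lemma span_pow_eq {g : ℕ} (x : Fin g → R) (j : ℕ) :
    Ideal.span (Set.range x) ^ j = Ideal.span (monSet x j) := by
  induction j with
  | zero =>
    rw [pow_zero, eq_comm, Ideal.one_eq_top, Ideal.eq_top_iff_one]
    apply Ideal.subset_span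
    refine ⟨0, ?_, by simp⟩
    simp [Finset.Nat.mem_antidiagonalTuple]
  | succ j ih =>
    rw [pow_succ, ih, Ideal.span_mul_span]
    apply le_antisymm
    · rw [Ideal.span_le]
      intro z hz
      rw [Set.mem_mul] at hz
      obtain ⟨s, hs, t, ht, hz⟩ := hz
      obtain ⟨α, hα, rfl⟩ := hs
      obtain ⟨i, rfl⟩ := ht
      subst hz
      apply Ideal.subset_span
      refine ⟨α + Pi.single i 1, ?_, ?_⟩
      · simp only [Finset.coe_sort_coe, Finset.mem_coe, Finset.Nat.mem_antidiagonalTuple] at hα ⊢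
        simp only [Pi.add_apply]
        rw [Finset.sum_add_distrib, hα, sum_single_one]
      · simp only [Pi.add_apply, pow_add, Finset.prod_mul_distrib, prod_pow_single]
    · rw [Ideal.span_le]
      rintro z ⟨β, hβ, rfl⟩
      simp only [Finset.coe_sort_coe, Finset.mem_coe, Finset.Nat.mem_antidiagonalTuple] at hβ
      have hex : ∃ i, β i ≠ 0 := by
        by_contra hc
        push_neg at hc
        have : ∑ i, β i = 0 := Finset.sum_eq_zero (fun i _ => hc i)
        omega
      obtain ⟨i, hi⟩ := hex
      set α : Fin g → ℕ := fun k => β k - Pi.single (M := fun _ => ℕ) i 1 k with hαdef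
      have hβα : β = α + Pi.single i 1 := by
        funext k
        by_cases hk : k = i
        · subst hk; simp [hαdef]; omega
        · simp [hαdef, Pi.single_eq_of_ne hk]
      have hαmem : α ∈ Finset.Nat.antidiagonalTuple g j := by
        rw [Finset.Nat.mem_antidiagonalTuple]
        have : ∑ k, β k = (∑ k, α k) + 1 := by
          rw [hβα]
          simp only [Pi.add_apply]
          rw [Finset.sum_add_distrib, sum_single_one]
        omega
      have hprod : ∏ k, x k ^ β k = (∏ k, x k ^ α k) * x i := by
        rw [hβα]
        simp only [Pi.add_apply, pow_add, Finset.prod_mul_distrib, prod_pow_single]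
      simp only [SetLike.mem_coe]
      show (∏ k, x k ^ β k) ∈ _
      rw [hprod]
      apply Ideal.subset_span
      rw [Set.mem_mul]
      exact ⟨∏ k, x k ^ α k, ⟨α, hαmem, rfl⟩, x i, ⟨i, rfl⟩, rfl⟩

lemma card_aT_le (g j : ℕ) :
    (Finset.Nat.antidiagonalTuple (g+1) j).card ≤ (j+1)^g := by
  have H := Finset.card_le_card_of_injOn (s := Finset.Nat.antidiagonalTuple (g+1) j)
    (t := Fintype.piFinset (fun _ : Fin g => Finset.range (j+1)))
    (fun (α : Fin (g+1) → ℕ) => α ∘ Fin.succ) ?_ ?_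
  · refine H.trans (le_of_eq ?_)
    rw [Fintype.card_piFinset]
    simp
  · intro α hα
    rw [Finset.mem_coe, Finset.Nat.mem_antidiagonalTuple] at hα
    rw [Finset.mem_coe, Fintype.mem_piFinset]
    intro i
    rw [Finset.mem_range]
    simp only [Function.comp_apply]
    have : α i.succ ≤ ∑ k, α k := Finset.single_le_sum (fun k _ => Nat.zero_le _) (Finset.mem_univ _)
    omega
  · intro a ha b hb hab
    rw [Finset.mem_coe, Finset.Nat.mem_antidiagonalTuple] at ha hb
    rw [Fin.sum_univ_succ] at ha hb
    have hsum : ∑ i : Fin g, a i.succ = ∑ i : Fin g, b i.succ :=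
      Finset.sum_congr rfl (fun i _ => by simpa using congrFun hab i)
    have h0 : a 0 = b 0 := by omega
    funext k
    refine Fin.cases h0 (fun i => by simpa using congrFun hab i) k

lemma sum_card_aT_le (g n : ℕ) (hn : 1 ≤ n) :
    ∑ j ∈ Finset.range n, (Finset.Nat.antidiagonalTuple g j).card ≤ n^g := by
  cases g with
  | zero =>
    calc ∑ j ∈ Finset.range n, (Finset.Nat.antidiagonalTuple 0 j).card
        ≤ ∑ j ∈ Finset.range n, if j = 0 then 1 else 0 := by
          apply Finset.sum_le_sum
          intro j _
          by_cases hj : j = 0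
          · subst hj
            simp only [if_pos rfl]
            apply Finset.card_le_one.mpr
            intro a _ b _
            exact Subsingleton.elim a b
          · rw [if_neg hj, Nat.le_zero, Finset.card_eq_zero, Finset.eq_empty_iff_forall_notMem]
            intro α hα
            rw [Finset.Nat.mem_antidiagonalTuple] at hα
            simp at hα
            omega
      _ = 1 := by
          rw [Finset.sum_ite_eq' (Finset.range n) 0 (fun _ => 1)]
          simp [Finset.mem_range, hn]
          omega
      _ ≤ n^0 := by simp
  | succ g =>
    calc ∑ j ∈ Finset.range n, (Finset.Nat.antidiagonalTuple (g+1) j).card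
        ≤ ∑ j ∈ Finset.range n, n^g := by
          apply Finset.sum_le_sum
          intro j hj
          rw [Finset.mem_range] at hj
          exact (card_aT_le g j).trans (Nat.pow_le_pow_left (by omega) g)
      _ = n * n^g := by rw [Finset.sum_const, Finset.card_range, smul_eq_mul]
      _ = n^(g+1) := by ring


end S3
section S4
variable {R : Type*} [CommRing R]
variable {M : Type*} [AddCommGroup M] [Module R M]

variable {R : Type*} [CommRing R]
variable {M : Type*} [AddCommGroup M] [Module R M]

lemma len_le_card_mul (Q : Ideal R) {ι : Type*} [Fintype ι] (v : ι → M)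
    (hv : Submodule.span R (Set.range v) = ⊤) (hann : ∀ q ∈ Q, ∀ x : M, q • x = 0) :
    len R M ≤ (Fintype.card ι : ℕ∞) * len R (R ⧸ Q) := by
  have e := Fintype.equivFin ι
  refine len_le_gen_mul Q (Fintype.card ι) M (v ∘ e.symm) ?_ hann
  rw [Function.Surjective.range_comp e.symm.surjective, hv]

/-- the family of elements of `span T` given by `T` spans. -/
lemma span_subtype_top (T : Set M) :
    Submodule.span R (Set.range (fun t : T =>
      (⟨t.1, Submodule.subset_span t.2⟩ : Submodule.span R T))) = ⊤ := by
  rw [eq_top_iff]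
  rintro ⟨y, hy⟩ -
  refine Submodule.span_induction
    (p := fun z hz => (⟨z, hz⟩ : Submodule.span R T) ∈ Submodule.span R
      (Set.range (fun t : T => (⟨t.1, Submodule.subset_span t.2⟩ : Submodule.span R T))))
    ?_ ?_ ?_ ?_ hy
  · intro z hz
    exact Submodule.subset_span ⟨⟨z, hz⟩, rfl⟩
  · exact Submodule.zero_mem _
  · intro a b ha hb iha ihb
    exact add_mem iha ihb
  · intro r a ha iha
    exact Submodule.smul_mem _ r iha

lemma len_quot_pow_le {g : ℕ} (x : Fin g → R) (n : ℕ) :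
    len R (R ⧸ (Ideal.span (Set.range x))^n) ≤
      ((∑ j ∈ Finset.range n, (Finset.Nat.antidiagonalTuple g j).card : ℕ) : ℕ∞) *
        len R (R ⧸ Ideal.span (Set.range x)) := by
  set Q := Ideal.span (Set.range x) with hQ
  induction n with
  | zero =>
    have : Subsingleton (R ⧸ (Q ^ 0)) := by
      rw [pow_zero]
      exact Submodule.Quotient.subsingleton_iff.mpr Ideal.one_eq_top
    rw [len_subsingleton this]
    simp
  | succ n ih =>
    set N : Submodule R (R ⧸ Q^(n+1)) := Submodule.map (Q^(n+1)).mkQ (Q^n) with hN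
    have hle : Q^(n+1) ≤ Q^n := Ideal.pow_le_pow_right (by omega)
    have h1 : len R (R ⧸ Q^(n+1)) ≤ len R N + len R ((R ⧸ Q^(n+1)) ⧸ N) := len_add_le N
    have h2 : len R ((R ⧸ Q^(n+1)) ⧸ N) = len R (R ⧸ Q^n) :=
      len_eq_of_equiv (Submodule.quotientQuotientEquivQuotient _ _ hle)
    -- N is spanned by images of monomials of degree n and killed by Q
    have hNspan : N = Submodule.span R ((Q^(n+1)).mkQ '' monSet x n) := by
      rw [hN, span_pow_eq (R := R) x n]
      exact Submodule.map_span _ _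
    have h3 : len R N ≤ ((Finset.Nat.antidiagonalTuple g n).card : ℕ∞) * len R (R ⧸ Q) := by
      set v : (Finset.Nat.antidiagonalTuple g n) → N := fun a =>
        ⟨(Q^(n+1)).mkQ (∏ i, x i ^ a.1 i), by
          rw [hN]
          exact Submodule.mem_map_of_mem ((span_pow_eq (R := R) x n).symm ▸
            Ideal.subset_span ⟨a.1, a.2, rfl⟩)⟩ with hv
      have hmain := len_le_card_mul Q v ?_ ?_
      · calc len R N ≤ _ := hmain
          _ = _ := by rw [Fintype.card_coe]
      · -- spanning
        have key : ∀ w (hw : w ∈ Submodule.span R (⇑((Q^(n+1)).mkQ) '' monSet x n)),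
            ∀ h : w ∈ N, (⟨w, h⟩ : N) ∈ Submodule.span R (Set.range v) := by
          intro w hw
          refine Submodule.span_induction
            (p := fun w _ => ∀ h : w ∈ N, (⟨w, h⟩ : N) ∈ Submodule.span R (Set.range v))
            ?_ ?_ ?_ ?_ hw
          · rintro w ⟨y, ⟨α, hα, rfl⟩, rfl⟩ h
            refine Submodule.subset_span ⟨⟨α, hα⟩, ?_⟩
            exact Subtype.ext rfl
          · intro h
            have : (⟨0, h⟩ : N) = 0 := by ext; rfl
            rw [this]
            exact Submodule.zero_mem _
          · intro a b ha hb iha ihb h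
            have ha' : a ∈ N := by rw [hNspan]; exact ha
            have hb' : b ∈ N := by rw [hNspan]; exact hb
            have : (⟨a + b, h⟩ : N) = ⟨a, ha'⟩ + ⟨b, hb'⟩ := by ext; rfl
            rw [this]
            exact add_mem (iha ha') (ihb hb')
          · intro r a ha iha h
            have ha' : a ∈ N := by rw [hNspan]; exact ha
            have : (⟨r • a, h⟩ : N) = r • ⟨a, ha'⟩ := by ext; rfl
            rw [this]
            exact Submodule.smul_mem _ r (iha ha')
        rw [eq_top_iff]
        rintro ⟨z, hz⟩ -
        refine key z ?_ hz
        rw [← hNspan]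
        exact hz
      · intro q hq z
        obtain ⟨w, hw⟩ := z
        rw [hN] at hw
        obtain ⟨y, hy, hyw⟩ := hw
        ext
        show q • w = 0
        rw [← hyw, Submodule.mkQ_apply, ← Submodule.Quotient.mk_smul,
          Submodule.Quotient.mk_eq_zero]
        have : q • y = q * y := rfl
        rw [this]
        have : q * y ∈ Q * Q^n := Ideal.mul_mem_mul hq hy
        rwa [← pow_succ'] at this
    calc len R (R ⧸ Q^(n+1)) ≤ _ := h1.trans (add_le_add h3 (le_of_eq h2))
      _ ≤ ((Finset.Nat.antidiagonalTuple g n).card : ℕ∞) * len R (R ⧸ Q) +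
          ((∑ j ∈ Finset.range n, (Finset.Nat.antidiagonalTuple g j).card : ℕ) : ℕ∞) *
            len R (R ⧸ Q) := add_le_add_right ih _
      _ = _ := by
        rw [← add_mul]
        congr 1
        rw [Finset.sum_range_succ]
        push_cast
        ring


end S4

section QuotMono
variable {R : Type*} [CommRing R]
lemma len_quot_mono {I J : Ideal R} (h : I ≤ J) : len R (R ⧸ J) ≤ len R (R ⧸ I) := by
  refine len_le_of_surjective (Submodule.mapQ I J LinearMap.id h) ?_
  intro z
  obtain ⟨y, rfl⟩ := Submodule.mkQ_surjective J z
  exact ⟨I.mkQ y, rfl⟩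
end QuotMono
section S5
variable {R : Type*} [CommRing R] [IsLocalRing R] [IsNoetherianRing R]

variable {R : Type*} [CommRing R] [IsLocalRing R] [IsNoetherianRing R]

lemma finite_minimalPrimes (J : Ideal R) : J.minimalPrimes.Finite := by
  rw [Ideal.minimalPrimes_eq_comap]
  exact Set.Finite.image _ (minimalPrimes.finite_of_isNoetherianRing (R ⧸ J))

lemma sop_exists (d : ℕ) (hd : ringKrullDim R = d) :
    ∃ x : Fin d → R, (∀ i, x i ∈ maximalIdeal R) ∧
      ∃ c : ℕ, maximalIdeal R ^ c ≤ Ideal.span (Set.range x) := by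
  have main : ∀ i : ℕ, i ≤ d → ∃ x : Fin i → R, (∀ j, x j ∈ maximalIdeal R) ∧
      ∀ p : LTSeries (PrimeSpectrum R),
        Ideal.span (Set.range x) ≤ p.head.asIdeal → p.length + i ≤ d := by
    intro i
    induction i with
    | zero =>
      intro _
      refine ⟨fun j => j.elim0, fun j => j.elim0, fun p _ => ?_⟩
      have h1 : (p.length : WithBot ℕ∞) ≤ Order.krullDim (PrimeSpectrum R) :=
        Order.LTSeries.length_le_krullDim p
      rw [show Order.krullDim (PrimeSpectrum R) = ringKrullDim R from rfl, hd] at h1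
      have : p.length ≤ d := by exact_mod_cast h1
      omega
    | succ i ih =>
      intro hii
      obtain ⟨x, hxm, hchain⟩ := ih (by omega)
      set J := Ideal.span (Set.range x) with hJ
      set S := {p ∈ J.minimalPrimes | p ≠ maximalIdeal R} with hS
      have hSfin : S.Finite := (finite_minimalPrimes J).subset (fun p hp => hp.1)
      -- choose y in m avoiding all primes in S
      have hex : ∃ y ∈ maximalIdeal R, ∀ p ∈ S, y ∉ p := by
        by_contra hc
        push_neg at hc
        have hsub : (maximalIdeal R : Set R) ⊆ ⋃ p ∈ hSfin.toFinset, ((id p : Ideal R) : Set R) := by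
          intro y hy
          obtain ⟨p, hpS, hyp⟩ := hc y hy
          exact Set.mem_biUnion (hSfin.mem_toFinset.mpr hpS) hyp
        have := (Ideal.subset_union_prime (R := R) (s := hSfin.toFinset) (f := id) ⊥ ⊥
          (fun p hp _ _ => (hSfin.mem_toFinset.mp hp).1.1.1)).mp hsub
        obtain ⟨p, hpS, hmp⟩ := this
        rw [hSfin.mem_toFinset] at hpS
        have hpm : p ≤ maximalIdeal R :=
          le_maximalIdeal (hpS.1.1.1.ne_top)
        exact hpS.2 (le_antisymm hpm hmp)
      obtain ⟨y, hym, hyS⟩ := hex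
      refine ⟨Fin.snoc x y, ?_, ?_⟩
      · intro j
        refine Fin.lastCases ?_ ?_ j
        · rw [Fin.snoc_last]; exact hym
        · intro k; rw [Fin.snoc_castSucc]; exact hxm k
      · intro p hp
        have hJle : J ≤ Ideal.span (Set.range (Fin.snoc x y : Fin (i+1) → R)) := by
          apply Ideal.span_mono
          rintro - ⟨j, rfl⟩
          exact ⟨j.castSucc, Fin.snoc_castSucc _ _ _⟩
        have hJhead : J ≤ p.head.asIdeal := hJle.trans hp
        have hyhead : y ∈ p.head.asIdeal := by
          apply hp
          apply Ideal.subset_span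
          exact ⟨Fin.last i, Fin.snoc_last _ _⟩
        haveI := p.head.2
        obtain ⟨P, hPmin, hPle⟩ := Ideal.exists_minimalPrimes_le hJhead
        by_cases hPm : P ∈ S
        · -- P ≠ m, so y ∉ P, hence P < head, extend the chain
          have hyP : y ∉ P := hyS P hPm
          have hlt : P < p.head.asIdeal := lt_of_le_of_ne hPle (by
            intro he; exact hyP (he ▸ hyhead))
          haveI : P.IsPrime := hPm.1.1.1
          set Pp : PrimeSpectrum R := ⟨P, inferInstance⟩ with hPp
          have hlt' : Pp < p.head := (PrimeSpectrum.asIdeal_lt_asIdeal _ _).mp hlt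
          set p' := p.cons Pp hlt' with hp'
          have hhead : p'.head = Pp := RelSeries.head_cons _ _ _
          have := hchain p' (by rw [hhead]; exact hPm.1.1.2)
          have hlen : p'.length = p.length + 1 := RelSeries.cons_length _ _ _
          omega
        · -- P = m; then head = m and the chain is trivial
          have hPm' : P = maximalIdeal R := by
            by_contra hne
            exact hPm ⟨hPmin, hne⟩
          have hheadm : p.head.asIdeal = maximalIdeal R := by
            apply le_antisymm (le_maximalIdeal p.head.2.ne_top)
            rw [← hPm']; exact hPle
          -- all primes ≤ m, and head = m, so length = 0
          have hlen0 : p.length = 0 := by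
            by_contra hne
            have hlast : p.head < p.last := by
              apply p.strictMono
              rw [Fin.lt_def]
              simpa using Nat.pos_of_ne_zero hne
            have h1 : p.last.asIdeal ≤ maximalIdeal R := le_maximalIdeal p.last.2.ne_top
            have h2 : p.head.asIdeal < p.last.asIdeal :=
              (PrimeSpectrum.asIdeal_lt_asIdeal _ _).mpr hlast
            rw [hheadm] at h2
            exact absurd (lt_of_lt_of_le h2 h1) (lt_irrefl _)
          omega
  obtain ⟨x, hxm, hchain⟩ := main d le_rfl
  refine ⟨x, hxm, ?_⟩
  have hrad : maximalIdeal R ≤ (Ideal.span (Set.range x)).radical := by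
    rw [← Ideal.sInf_minimalPrimes]
    apply le_sInf
    intro P hP
    haveI : P.IsPrime := hP.1.1
    have hPle : P ≤ maximalIdeal R := le_maximalIdeal hP.1.1.ne_top
    have hPeq : P = maximalIdeal R := by
      by_contra hne
      have hlt : P < maximalIdeal R := lt_of_le_of_ne hPle hne
      set Pm : PrimeSpectrum R := ⟨maximalIdeal R, (maximalIdeal.isMaximal R).isPrime⟩
      set Pp : PrimeSpectrum R := ⟨P, inferInstance⟩
      have hlt' : Pp < Pm := (PrimeSpectrum.asIdeal_lt_asIdeal _ _).mp hlt
      set p : LTSeries (PrimeSpectrum R) := (RelSeries.singleton _ Pm).cons Pp hlt' with hpdef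
      have := hchain p (by
        rw [show p.head = Pp from RelSeries.head_cons _ _ _]
        exact hP.1.2)
      have hlen : p.length = 1 := RelSeries.cons_length _ _ _
      omega
    rw [hPeq]
  exact Ideal.exists_pow_le_of_le_radical_of_fg hrad (IsNoetherian.noetherian _)


end S5

end CutAux

/-- The length of an `R`-module `M`, defined as the Krull dimension of its lattice of
submodules (this agrees with the usual length for modules of finite length). -/
noncomputable def modLength (R M : Type*) [CommRing R] [AddCommGroup M] [Module R M] : ℝ :=
  ((WithBot.unbotD 0 (Order.krullDim (Submodule R M))).toNat : ℝ)

/-- The Hilbert–Samuel multiplicity `e(I) = lim_n d! ℓ(R/Iⁿ)/nᵈ` of an ideal `I` in a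
`d`-dimensional ring (expressed as a `limsup`, which agrees with the limit whenever the
limit exists, e.g. for `m`-primary ideals in Noetherian local rings). -/
noncomputable def hsMult (d : ℕ) {R : Type*} [CommRing R] (I : Ideal R) : ℝ :=
  Filter.limsup
    (fun n : ℕ => (Nat.factorial d : ℝ) * modLength R (R ⧸ I ^ n) / (n : ℝ) ^ d)
    Filter.atTop

/-- A graded family of `m_R`-primary ideals: `I 0 = R`, `I m · I n ⊆ I (m+n)`, and each
`I n` (`n > 0`) is `m_R`-primary, i.e. `m_R ^ k ⊆ I n ⊆ m_R` for some `k`. -/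
structure GradedFamily (R : Type*) [CommRing R] [IsLocalRing R] where
  I : ℕ → Ideal R
  I_zero : I 0 = ⊤
  mul_le : ∀ m n : ℕ, I m * I n ≤ I (m + n)
  primary : ∀ n : ℕ, 0 < n → (∃ k : ℕ, maximalIdeal R ^ k ≤ I n) ∧ I n ≤ maximalIdeal R

namespace CutAux

lemma modLength_eq_len (R M : Type*) [CommRing R] [AddCommGroup M] [Module R M] :
    modLength R M = ((len R M).toNat : ℝ) := rfl

section ANA


noncomputable def hsq (d : ℕ) {R : Type*} [CommRing R] (I : Ideal R) (n : ℕ) : ℝ :=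
  (Nat.factorial d : ℝ) * modLength R (R ⧸ I ^ n) / (n : ℝ) ^ d

lemma hsMult_eq_limsup (d : ℕ) {R : Type*} [CommRing R] (I : Ideal R) :
    hsMult d I = Filter.limsup (hsq d I) Filter.atTop := rfl

lemma modLength_nonneg (R M : Type*) [CommRing R] [AddCommGroup M] [Module R M] :
    0 ≤ modLength R M := Nat.cast_nonneg _

lemma hsq_nonneg (d : ℕ) {R : Type*} [CommRing R] (I : Ideal R) (n : ℕ) :
    0 ≤ hsq d I n :=
  div_nonneg (mul_nonneg (Nat.cast_nonneg _) (modLength_nonneg R _)) (by positivity)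

variable {d : ℕ} {R : Type*} [CommRing R]

lemma hsq_cobounded (I : Ideal R) :
    Filter.IsCoboundedUnder (· ≤ ·) Filter.atTop (hsq d I) :=
  Filter.IsCoboundedUnder.of_frequently_ge
    (Filter.Eventually.frequently (Filter.Eventually.of_forall (hsq_nonneg d I)))

lemma hsq_bounded {I : Ideal R} {C : ℝ} (hC : ∀ n : ℕ, 1 ≤ n → hsq d I n ≤ C) :
    Filter.IsBoundedUnder (· ≤ ·) Filter.atTop (hsq d I) :=
  ⟨C, Filter.eventually_map.mpr (Filter.eventually_atTop.mpr ⟨1, hC⟩)⟩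

lemma hsMult_nonneg {I : Ideal R} {C : ℝ} (hC : ∀ n : ℕ, 1 ≤ n → hsq d I n ≤ C) :
    0 ≤ hsMult d I := by
  rw [hsMult_eq_limsup]
  exact Filter.le_limsup_of_frequently_le
    (Filter.Eventually.frequently (Filter.Eventually.of_forall (hsq_nonneg d I)))
    (hsq_bounded hC)

lemma hsMult_mono {I J : Ideal R} {C : ℝ} (hC : ∀ n : ℕ, 1 ≤ n → hsq d I n ≤ C)
    (hle : ∀ n : ℕ, 1 ≤ n → hsq d J n ≤ hsq d I n) :
    hsMult d J ≤ hsMult d I := by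
  rw [hsMult_eq_limsup, hsMult_eq_limsup]
  exact Filter.limsup_le_limsup (Filter.eventually_atTop.mpr ⟨1, hle⟩)
    (hsq_cobounded J) (hsq_bounded hC)

lemma hsMult_pow_le {I : Ideal R} (j : ℕ) (hj : 1 ≤ j) {C : ℝ}
    (hC : ∀ n : ℕ, 1 ≤ n → hsq d I n ≤ C)
    (heq : ∀ n : ℕ, 1 ≤ n → hsq d (I ^ j) n = (j : ℝ) ^ d * hsq d I (j * n)) :
    hsMult d (I ^ j) ≤ (j : ℝ) ^ d * hsMult d I := by
  have hjpos : (0 : ℝ) < (j : ℝ) ^ d := by positivity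
  set S := {a : ℝ | ∀ᶠ n in Filter.atTop, hsq d I n ≤ a} with hS
  have hlimsup : hsMult d I = sInf S := by
    rw [hsMult_eq_limsup, Filter.limsup_eq]
  have hSne : S.Nonempty := ⟨C, Filter.eventually_atTop.mpr ⟨1, hC⟩⟩
  have key : ∀ a ∈ S, hsMult d (I ^ j) ≤ (j : ℝ) ^ d * a := by
    intro a ha
    rw [hsMult_eq_limsup]
    refine Filter.limsup_le_of_le (hsq_cobounded _) ?_
    obtain ⟨N, hN⟩ := Filter.eventually_atTop.mp ha
    refine Filter.eventually_atTop.mpr ⟨max N 1, fun n hn => ?_⟩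
    have hn1 : 1 ≤ n := le_trans (le_max_right N 1) hn
    rw [heq n hn1]
    have hjn : N ≤ j * n :=
      le_trans (le_max_left N 1) (hn.trans (Nat.le_mul_of_pos_left n (by omega)))
    exact mul_le_mul_of_nonneg_left (hN _ hjn) (le_of_lt hjpos)
  have hdiv : hsMult d (I ^ j) / (j : ℝ) ^ d ≤ sInf S := by
    refine le_csInf hSne (fun a ha => ?_)
    rw [div_le_iff₀ hjpos, mul_comm]
    exact key a ha
  rw [hlimsup]
  calc hsMult d (I ^ j) = hsMult d (I ^ j) / (j : ℝ) ^ d * (j : ℝ) ^ d := by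
        field_simp
    _ ≤ sInf S * (j : ℝ) ^ d := mul_le_mul_of_nonneg_right hdiv (le_of_lt hjpos)
    _ = (j : ℝ) ^ d * sInf S := mul_comm _ _


end ANA

section FAM
variable {R : Type*} [CommRing R] [IsLocalRing R]

lemma family_pow_le (𝓘 : GradedFamily R) :
    ∀ (n q : ℕ), 1 ≤ q → 𝓘.I n ^ q ≤ 𝓘.I (n * q) := by
  intro n q hq
  induction q with
  | zero => omega
  | succ q ih =>
    rcases Nat.lt_or_ge 1 (q+1) with h1 | h1
    · have hq1 : 1 ≤ q := by omega
      calc 𝓘.I n ^ (q+1) = 𝓘.I n ^ q * 𝓘.I n := pow_succ _ _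
        _ ≤ 𝓘.I (n*q) * 𝓘.I n := mul_le_mul_left (ih hq1) _
        _ ≤ 𝓘.I (n*q + n) := 𝓘.mul_le _ _
        _ = 𝓘.I (n*(q+1)) := by rw [show n*q + n = n*(q+1) by ring]
    · have : q = 0 := by omega
      subst this
      simp
end FAM

end CutAux

/-- If `R` is a `d`-dimensional Noetherian local ring and `𝓘 = {I_n}` is a
graded family of `m_R`-primary ideals, then the limit `lim_{p→∞} e(I_p)/pᵈ` exists as a
nonnegative real number. -/
theorem multiplicity_of_graded_family_exists
    {R : Type*} [CommRing R] [IsLocalRing R] [IsNoetherianRing R] (d : ℕ)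
    (hd : ringKrullDim R = d) (𝓘 : GradedFamily R) :
    ∃ L : ℝ, 0 ≤ L ∧
      Tendsto (fun p : ℕ => hsMult d (𝓘.I p) / (p : ℝ) ^ d) atTop (nhds L) := by
  classical
  set m := maximalIdeal R with hmdef
  -- primary constants for the family
  have hkex : ∀ p : ℕ, ∃ k : ℕ, 1 ≤ k ∧ m ^ k ≤ 𝓘.I p := by
    intro p
    cases p with
    | zero => exact ⟨1, le_rfl, by rw [𝓘.I_zero]; exact le_top⟩
    | succ p =>
      obtain ⟨k, hk⟩ := (𝓘.primary (p+1) (Nat.succ_pos p)).1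
      exact ⟨k+1, by omega, le_trans (Ideal.pow_le_pow_right (by omega)) hk⟩
  choose kk hkk1 hkk2 using hkex
  have hIm : ∀ p : ℕ, 1 ≤ p → 𝓘.I p ≤ m := fun p hp => (𝓘.primary p hp).2
  -- system of parameters
  obtain ⟨x, hxm, c, hc⟩ := CutAux.sop_exists d hd
  set Q := Ideal.span (Set.range x) with hQdef
  have hQm : Q ≤ m := Ideal.span_le.mpr (by rintro - ⟨i, rfl⟩; exact hxm i)
  -- the maximal ideal is finitely generated
  obtain ⟨T, hT⟩ := IsNoetherian.noetherian m
  set gw : Fin T.card → R := fun i => (T.equivFin.symm i : R) with hgw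
  have hgwr : Ideal.span (Set.range gw) = m := by
    rw [← hT]
    congr 1
    rw [hgw]
    have h1 : Set.range (fun i => (T.equivFin.symm i : R)) =
        Subtype.val '' Set.range T.equivFin.symm := by
      rw [← Set.range_comp]; rfl
    rw [h1, Equiv.range_eq_univ, Set.image_univ]
    simp
  -- finiteness of lengths of quotients by powers of m
  have hmlen : ∀ n : ℕ, CutAux.len R (R ⧸ m ^ n) ≠ ⊤ := by
    intro n
    have h1 := CutAux.len_quot_pow_le gw n
    rw [hgwr] at h1
    have h2 : CutAux.len R (R ⧸ m) ≤ 1 := by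
      apply CutAux.len_le_one_of_simple
      have : IsSimpleModule R (R ⧸ m) :=
        isSimpleModule_iff_isCoatom.mpr (Ideal.isMaximal_def.mp (maximalIdeal.isMaximal R))
      exact this.toIsSimpleOrder
    intro htop
    rw [htop] at h1
    have h3 := h1.trans (mul_le_mul_right h2 _)
    rw [mul_one] at h3
    exact (ENat.coe_ne_top _) (top_le_iff.mp h3)
  have hQfin : CutAux.len R (R ⧸ Q) ≠ ⊤ :=
    ne_top_of_le_ne_top (hmlen c) (CutAux.len_quot_mono hc)
  set B : ℝ := (((CutAux.len R (R ⧸ Q)).toNat : ℕ) : ℝ) with hBdef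
  -- key finiteness for primary ideals
  have key_fin : ∀ (I : Ideal R) (k : ℕ), m ^ k ≤ I → ∀ n : ℕ,
      CutAux.len R (R ⧸ I ^ n) ≠ ⊤ := by
    intro I k hmI n
    refine ne_top_of_le_ne_top (hmlen (k*n)) (CutAux.len_quot_mono ?_)
    calc m ^ (k*n) = (m ^ k) ^ n := pow_mul m k n
      _ ≤ I ^ n := Ideal.pow_right_mono hmI n
  -- key polynomial bound on lengths
  have key_mod : ∀ (I : Ideal R) (k n : ℕ), 1 ≤ k → 1 ≤ n → m ^ k ≤ I →
      modLength R (R ⧸ I ^ n) ≤ B * ((k : ℝ) * n) ^ d := by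
    intro I k n hk hn hmI
    have h1 : Q ^ (k*n) ≤ I ^ n := by
      calc Q ^ (k*n) ≤ m ^ (k*n) := Ideal.pow_right_mono hQm _
        _ = (m ^ k) ^ n := pow_mul m k n
        _ ≤ I ^ n := Ideal.pow_right_mono hmI n
    have h2 : CutAux.len R (R ⧸ I ^ n) ≤ (((k*n)^d : ℕ) : ℕ∞) * CutAux.len R (R ⧸ Q) := by
      refine (CutAux.len_quot_mono h1).trans ?_
      have h3 := CutAux.len_quot_pow_le x (k*n)
      rw [← hQdef] at h3
      refine h3.trans ?_
      refine mul_le_mul_left (Nat.cast_le.mpr (CutAux.sum_card_aT_le d (k*n) ?_)) _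
      exact Nat.one_le_iff_ne_zero.mpr (by positivity)
    have hfin2 : (((k*n)^d : ℕ) : ℕ∞) * CutAux.len R (R ⧸ Q) ≠ ⊤ :=
      WithTop.mul_ne_top (ENat.coe_ne_top _) hQfin
    have hQeq : (((CutAux.len R (R ⧸ Q)).toNat : ℕ) : ℕ∞) = CutAux.len R (R ⧸ Q) :=
      ENat.coe_toNat hQfin
    have h3 : (CutAux.len R (R ⧸ I ^ n)).toNat ≤ (k*n)^d * (CutAux.len R (R ⧸ Q)).toNat := by
      have h2' : CutAux.len R (R ⧸ I ^ n) ≤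
          ((((k*n)^d * (CutAux.len R (R ⧸ Q)).toNat : ℕ)) : ℕ∞) := by
        rw [Nat.cast_mul, hQeq]
        exact h2
      have h4 := ENat.toNat_le_toNat h2' (ENat.coe_ne_top _)
      rwa [ENat.toNat_coe] at h4
    rw [CutAux.modLength_eq_len]
    calc ((CutAux.len R (R ⧸ I ^ n)).toNat : ℝ)
        ≤ (((k*n)^d * (CutAux.len R (R ⧸ Q)).toNat : ℕ) : ℝ) := Nat.cast_le.mpr h3
      _ = B * ((k:ℝ)*n)^d := by push_cast; ring
  -- bound on the Hilbert-Samuel sequences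
  have hsqC : ∀ (I : Ideal R) (k : ℕ), 1 ≤ k → m ^ k ≤ I → ∀ n : ℕ, 1 ≤ n →
      CutAux.hsq d I n ≤ (Nat.factorial d : ℝ) * B * (k:ℝ)^d := by
    intro I k hk hmI n hn
    have hnpos : (0:ℝ) < (n:ℝ)^d := by
      have : (1:ℝ) ≤ (n:ℝ) := by exact_mod_cast hn
      positivity
    rw [CutAux.hsq, div_le_iff₀ hnpos]
    calc (Nat.factorial d : ℝ) * modLength R (R ⧸ I ^ n)
        ≤ (Nat.factorial d : ℝ) * (B * ((k:ℝ)*n)^d) := by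
          refine mul_le_mul_of_nonneg_left (key_mod I k n hk hn hmI) ?_
          positivity
      _ = (Nat.factorial d : ℝ) * B * (k:ℝ)^d * (n:ℝ)^d := by rw [mul_pow]; ring
  -- nonnegativity of the multiplicities
  have hsnn : ∀ p : ℕ, 0 ≤ hsMult d (𝓘.I p) := fun p =>
    CutAux.hsMult_nonneg (hsqC (𝓘.I p) (kk p) (hkk1 p) (hkk2 p))
  set a : ℕ → ℝ := fun p => hsMult d (𝓘.I p) / (p : ℝ) ^ d with hadef
  have hann : ∀ p : ℕ, 0 ≤ a p := by
    intro p
    exact div_nonneg (hsnn p) (by positivity)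
  set A : Set ℝ := a '' {p : ℕ | 1 ≤ p} with hAdef
  have hAne : A.Nonempty := ⟨a 1, ⟨1, by simp, rfl⟩⟩
  have hAbdd : BddBelow A := ⟨0, by rintro b ⟨p, hp, rfl⟩; exact hann p⟩
  set L := sInf A with hLdef
  have hL0 : 0 ≤ L := le_csInf hAne (by rintro b ⟨p, hp, rfl⟩; exact hann p)
  refine ⟨L, hL0, ?_⟩
  rw [Metric.tendsto_atTop]
  intro ε hε
  have hLlt : sInf A < L + ε/2 := by rw [← hLdef]; linarith
  obtain ⟨b, ⟨p₀, hp₀, rfl⟩, hb⟩ := exists_lt_of_csInf_lt hAne hLlt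
  simp only [Set.mem_setOf_eq] at hp₀
  -- the uniform primary constant
  set K := (Finset.range p₀).sup kk + 1 with hKdef
  -- key inclusion
  have hsub : ∀ p : ℕ, p₀ ≤ p → 𝓘.I p₀ ^ (p / p₀ + K) ≤ 𝓘.I p := by
    intro p hp
    have hp₀pos : 0 < p₀ := hp₀
    have hq1 : 1 ≤ p / p₀ := (Nat.one_le_div_iff hp₀pos).mpr hp
    have hr : p % p₀ < p₀ := Nat.mod_lt _ hp₀pos
    have hkrK : kk (p % p₀) ≤ K := by
      have := Finset.le_sup (f := kk) (Finset.mem_range.mpr hr)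
      omega
    calc 𝓘.I p₀ ^ (p / p₀ + K) ≤ 𝓘.I p₀ ^ (p / p₀ + kk (p % p₀)) :=
          Ideal.pow_le_pow_right (by omega)
      _ = 𝓘.I p₀ ^ (p / p₀) * 𝓘.I p₀ ^ (kk (p % p₀)) := pow_add _ _ _
      _ ≤ 𝓘.I (p₀ * (p / p₀)) * 𝓘.I (p % p₀) := by
          refine mul_le_mul' (CutAux.family_pow_le 𝓘 p₀ (p / p₀) hq1) ?_
          calc 𝓘.I p₀ ^ kk (p % p₀) ≤ m ^ kk (p % p₀) :=
                Ideal.pow_right_mono (hIm p₀ hp₀) _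
            _ ≤ 𝓘.I (p % p₀) := hkk2 (p % p₀)
      _ ≤ 𝓘.I (p₀ * (p / p₀) + p % p₀) := 𝓘.mul_le _ _
      _ = 𝓘.I p := by rw [Nat.div_add_mod]
  -- comparison of multiplicities
  have hcomp : ∀ p : ℕ, p₀ ≤ p →
      a p ≤ a p₀ * (((p / p₀ : ℕ) + K : ℝ) / ((p / p₀ : ℕ) : ℝ)) ^ d := by
    intro p hp
    have hp₀pos : 0 < p₀ := hp₀
    have hq1 : 1 ≤ p / p₀ := (Nat.one_le_div_iff hp₀pos).mpr hp
    set q := p / p₀ with hqdef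
    have hppos : 1 ≤ p := le_trans hp₀ hp
    -- the ideal (I p₀)^(q+K) is m-primary
    have hprim : m ^ (kk p₀ * (q + K)) ≤ 𝓘.I p₀ ^ (q + K) := by
      calc m ^ (kk p₀ * (q + K)) = (m ^ kk p₀) ^ (q + K) := pow_mul _ _ _
        _ ≤ 𝓘.I p₀ ^ (q + K) := Ideal.pow_right_mono (hkk2 p₀) _
    have hprim1 : 1 ≤ kk p₀ * (q + K) := by
      have := hkk1 p₀
      have : 1 ≤ q + K := by omega
      exact Nat.one_le_iff_ne_zero.mpr (by positivity)
    -- step 1 : monotonicity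
    have h1 : hsMult d (𝓘.I p) ≤ hsMult d (𝓘.I p₀ ^ (q + K)) := by
      refine CutAux.hsMult_mono (hsqC _ _ hprim1 hprim) ?_
      intro n hn
      have hnpos : (0:ℝ) < (n:ℝ)^d := by
        have : (1:ℝ) ≤ (n:ℝ) := by exact_mod_cast hn
        positivity
      rw [CutAux.hsq, CutAux.hsq]
      have hmod : modLength R (R ⧸ (𝓘.I p) ^ n) ≤ modLength R (R ⧸ (𝓘.I p₀ ^ (q+K)) ^ n) := by
        rw [CutAux.modLength_eq_len, CutAux.modLength_eq_len]
        refine Nat.cast_le.mpr (ENat.toNat_le_toNat ?_ ?_)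
        · exact CutAux.len_quot_mono (Ideal.pow_right_mono (hsub p hp) n)
        · exact key_fin _ _ hprim n
      gcongr

    -- step 2 : power bound
    have h2 : hsMult d (𝓘.I p₀ ^ (q + K)) ≤ ((q + K : ℕ) : ℝ)^d * hsMult d (𝓘.I p₀) := by
      refine CutAux.hsMult_pow_le (q + K) (by omega)
        (hsqC (𝓘.I p₀) (kk p₀) (hkk1 p₀) (hkk2 p₀)) ?_
      intro n hn
      rw [CutAux.hsq, CutAux.hsq]
      rw [show (𝓘.I p₀ ^ (q + K)) ^ n = 𝓘.I p₀ ^ ((q + K) * n) from (pow_mul _ _ _).symm]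
      have hn0 : (0:ℝ) < (n:ℝ) := by exact_mod_cast hn
      have hqK0 : (0:ℝ) < ((q + K : ℕ) : ℝ) := by
        have : 1 ≤ q + K := by omega
        exact_mod_cast this
      push_cast
      rw [mul_pow]
      field_simp
    -- combine
    have hple : ((p₀ * q : ℕ) : ℝ) ≤ (p : ℝ) := by
      exact_mod_cast Nat.mul_div_le p p₀
    have hq0 : (0:ℝ) < ((q:ℕ):ℝ) := by exact_mod_cast hq1
    have hp₀0 : (0:ℝ) < ((p₀:ℕ):ℝ) := by exact_mod_cast hp₀pos
    have hp0 : (0:ℝ) < ((p:ℕ):ℝ) := by exact_mod_cast hppos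
    have hnum : (0:ℝ) ≤ ((q + K : ℕ) : ℝ)^d * hsMult d (𝓘.I p₀) :=
      mul_nonneg (by positivity) (hsnn p₀)
    calc a p = hsMult d (𝓘.I p) / (p:ℝ)^d := rfl
      _ ≤ ((q + K : ℕ) : ℝ)^d * hsMult d (𝓘.I p₀) / (p:ℝ)^d := by
          gcongr
          exact h1.trans h2
      _ ≤ ((q + K : ℕ) : ℝ)^d * hsMult d (𝓘.I p₀) / (((p₀ * q : ℕ)):ℝ)^d := by
          have hpq0 : (0:ℝ) < (((p₀ * q : ℕ)):ℝ) := by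
            have : 0 < p₀ * q := Nat.mul_pos hp₀pos hq1
            exact_mod_cast this
          gcongr
      _ = a p₀ * (((q:ℕ) + K : ℝ) / ((q:ℕ) : ℝ)) ^ d := by
          rw [hadef]
          push_cast
          rw [div_pow, mul_pow]
          field_simp
  -- the limit process
  have htend : Tendsto (fun q : ℕ => a p₀ * ((1:ℝ) + (K:ℝ)/q)^d) atTop
      (nhds (a p₀)) := by
    have h1 : Tendsto (fun q : ℕ => (1:ℝ) + (K:ℝ)/q) atTop (nhds 1) := by
      have h0 := tendsto_const_div_atTop_nhds_zero_nat (K : ℝ)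
      have h2 : Tendsto (fun q : ℕ => (1:ℝ) + (K:ℝ)/q) atTop (nhds (1 + 0)) :=
        (tendsto_const_nhds : Tendsto (fun _ : ℕ => (1:ℝ)) atTop (nhds 1)).add h0
      simpa using h2
    have h2 : Tendsto (fun q : ℕ => ((1:ℝ) + (K:ℝ)/q)^d) atTop (nhds 1) := by
      have := h1.pow d
      simpa using this
    have h3 := h2.const_mul (a p₀)
    simpa using h3
  have hfin : ∀ᶠ q : ℕ in atTop, a p₀ * ((1:ℝ) + (K:ℝ)/q)^d < L + ε := by
    refine htend.eventually_lt_const ?_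
    linarith
  obtain ⟨Q₀, hQ₀⟩ := eventually_atTop.mp hfin
  refine ⟨p₀ * (max Q₀ 1 + 1), ?_⟩
  intro p hp
  set q := p / p₀ with hqdef
  have hp₀pos : 0 < p₀ := hp₀
  have hqQ : max Q₀ 1 + 1 ≤ q := by
    rw [hqdef, Nat.le_div_iff_mul_le hp₀pos]
    calc (max Q₀ 1 + 1) * p₀ = p₀ * (max Q₀ 1 + 1) := by ring
      _ ≤ p := hp
  have hq1 : 1 ≤ q := by omega
  have hpge : p₀ ≤ p := by
    calc p₀ = p₀ * 1 := by ring
      _ ≤ p₀ * (max Q₀ 1 + 1) := by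
          refine Nat.mul_le_mul_left _ (by omega)
      _ ≤ p := hp
  have hcomp' := hcomp p hpge
  have heq : (((q:ℕ) + K : ℝ) / ((q:ℕ) : ℝ)) = (1:ℝ) + (K:ℝ)/q := by
    have hq0 : ((q:ℕ):ℝ) ≠ 0 := by
      have : (0:ℝ) < ((q:ℕ):ℝ) := by exact_mod_cast hq1
      linarith
    field_simp
  rw [heq] at hcomp'
  have hap : a p < L + ε := lt_of_le_of_lt hcomp' (hQ₀ q (by omega))
  have hLle : L ≤ a p := csInf_le hAbdd ⟨p, by exact le_trans hp₀ hpge, rfl⟩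
  show dist (a p) L < ε
  rw [Real.dist_eq, abs_of_nonneg (by linarith : (0:ℝ) ≤ a p - L)]
  linarith
end

section
/- Let R be a Noetherian local ring of dimension d, 𝓘 = {I_n} a graded m_R-family, and c a positive real number. Define the twisted family 𝓘^{(c)} by (𝓘^{(c)})_n = I_{⌈cn⌉}. Then e(𝓘^{(c)}) = c^d · e(𝓘), where e(𝓙) := lim_{n→∞} e(J_n)/n^d for a graded m_R-family 𝓙 = {J_n}. -/
open Filter IsLocalRing Topology

/-- If `R` is a `d`-dimensional Noetherian local ring, `𝓘 = {I_n}` a graded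
`m_R`-family and `c > 0` a real number, then the twisted family `𝓘^{(c)}`, given by
`(𝓘^{(c)})_n = I_{⌈cn⌉}`, satisfies `e(𝓘^{(c)}) = cᵈ · e(𝓘)`, where `e(𝓙) = lim_n e(J_n)/nᵈ`. -/
theorem multiplicity_of_twist
    {R : Type*} [CommRing R] [IsLocalRing R] [IsNoetherianRing R] (d : ℕ)
    (hd : ringKrullDim R = d) (𝓘 : GradedFamily R) (c : ℝ) (hc : 0 < c) (e : ℝ)
    (he : Tendsto (fun n : ℕ => hsMult d (𝓘.I n) / (n : ℝ) ^ d) atTop (nhds e)) :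
    Tendsto (fun n : ℕ => hsMult d (𝓘.I ⌈c * n⌉₊) / (n : ℝ) ^ d) atTop
      (nhds (c ^ d * e)) := by
  have hceil : Tendsto (fun n : ℕ => ⌈c * (n : ℝ)⌉₊) atTop atTop := by
    apply tendsto_nat_ceil_atTop.comp
    exact (tendsto_natCast_atTop_atTop (R := ℝ)).const_mul_atTop hc
  have hmain : Tendsto (fun n : ℕ => hsMult d (𝓘.I ⌈c * n⌉₊) / (⌈c * (n:ℝ)⌉₊ : ℝ) ^ d)
      atTop (nhds e) := he.comp hceil
  have hratio : Tendsto (fun n : ℕ => ((⌈c * (n:ℝ)⌉₊ : ℝ) / n) ^ d) atTop (nhds (c ^ d)) :=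
    ((tendsto_nat_ceil_mul_div_atTop hc.le).comp tendsto_natCast_atTop_atTop).pow d
  have hmul := hratio.mul hmain
  refine hmul.congr' ?_
  filter_upwards [eventually_gt_atTop 0] with n hn
  have hn' : (0:ℝ) < n := by exact_mod_cast hn
  have hm : (0:ℝ) < (⌈c * (n:ℝ)⌉₊ : ℝ) := by
    have : 0 < ⌈c * (n:ℝ)⌉₊ := Nat.ceil_pos.2 (by positivity)
    exact_mod_cast this
  rw [div_pow]
  field_simp
end

section
/- Let R be a d-dimensional Noetherian local ring, 𝓘 = {I_n} a graded m_R-family, and M a finitely generated R-module. Then vol(𝓘; M) ≤ e(𝓘; M), where vol(𝓘; M) = limsup_{n→∞} d!·ℓ(M/I_n M)/n^d and e(𝓘; M) = lim_{n→∞} e(I_n; M)/n^d. -/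
open Filter IsLocalRing Topology

/-- The Hilbert–Samuel multiplicity `e(I; M) = lim_m d! ℓ(M/IᵐM)/mᵈ` of a module `M` with
respect to an ideal `I`, expressed as a limsup. -/
noncomputable def hsMultMod (d : ℕ) {R : Type*} [CommRing R] (I : Ideal R)
    (M : Type*) [AddCommGroup M] [Module R M] : ℝ :=
  Filter.limsup
    (fun m : ℕ => (Nat.factorial d : ℝ) *
      modLength R (M ⧸ (I ^ m • (⊤ : Submodule R M))) / (m : ℝ) ^ d)
    Filter.atTop


set_option linter.unusedSectionVars false
set_option maxHeartbeats 1000000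

section OrderLemmas

variable {α β : Type*} [PartialOrder α] [PartialOrder β]

lemma height_prod_le_aux (n : ℕ) :
    ∀ (a : α) (b : β), Order.height a + Order.height b ≤ n → Order.height (a, b) ≤ n := by
  induction n with
  | zero =>
    intro a b hab
    have hab' : Order.height a + Order.height b ≤ 0 := by exact_mod_cast hab
    have ha1 : Order.height a = 0 :=
      le_antisymm (le_trans (self_le_add_right _ _) hab') zero_le
    have ha2 : Order.height b = 0 :=
      le_antisymm (le_trans (self_le_add_left _ _) hab') zero_le
    apply Order.height_le
    intro p hp
    by_contra hlen
    have h0 : p.length ≠ 0 := by intro h; apply hlen; simp [h]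
    have hrel := p.eraseLast_last_rel_last h0
    rw [hp] at hrel
    rcases Prod.lt_iff.mp hrel with ⟨h1, _⟩ | ⟨_, h2⟩
    · exact (Order.height_eq_zero.mp ha1).not_lt h1
    · exact (Order.height_eq_zero.mp ha2).not_lt h2
  | succ n ih =>
    intro a b hab
    apply Order.height_le
    intro p hp
    rcases Nat.eq_zero_or_pos p.length with h0 | h0
    · simp [h0]
    have h0' : p.length ≠ 0 := h0.ne'
    obtain ⟨c, hcdef⟩ : ∃ c, p.eraseLast.last = c := ⟨_, rfl⟩
    have hrel : c < (a, b) := by rw [← hcdef, ← hp]; exact p.eraseLast_last_rel_last h0'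
    have hane : Order.height a ≠ ⊤ := by
      intro h
      have : (⊤ : ℕ∞) ≤ ((n+1 : ℕ) : ℕ∞) := by
        calc (⊤ : ℕ∞) = Order.height a := h.symm
          _ ≤ Order.height a + Order.height b := self_le_add_right _ _
          _ ≤ _ := hab
      exact (ENat.coe_ne_top (n+1)) (top_le_iff.mp this)
    have hbne : Order.height b ≠ ⊤ := by
      intro h
      have : (⊤ : ℕ∞) ≤ ((n+1 : ℕ) : ℕ∞) := by
        calc (⊤ : ℕ∞) = Order.height b := h.symm
          _ ≤ Order.height a + Order.height b := self_le_add_left _ _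
          _ ≤ _ := hab
      exact (ENat.coe_ne_top (n+1)) (top_le_iff.mp this)
    have hc1le : Order.height c.1 ≤ Order.height a := Order.height_mono hrel.le.1
    have hc2le : Order.height c.2 ≤ Order.height b := Order.height_mono hrel.le.2
    have hc1ne : Order.height c.1 ≠ ⊤ := fun h => hane (top_le_iff.mp (h ▸ hc1le))
    have hc2ne : Order.height c.2 ≠ ⊤ := fun h => hbne (top_le_iff.mp (h ▸ hc2le))
    have hstrict : Order.height c.1 < Order.height a ∨ Order.height c.2 < Order.height b := by
      rcases Prod.lt_iff.mp hrel with ⟨h1, _⟩ | ⟨_, h2⟩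
      · exact Or.inl (Order.height_strictMono h1 (lt_top_iff_ne_top.mpr hc1ne))
      · exact Or.inr (Order.height_strictMono h2 (lt_top_iff_ne_top.mpr hc2ne))
    lift Order.height a to ℕ using hane with ka hka
    lift Order.height b to ℕ using hbne with kb hkb
    lift Order.height c.1 to ℕ using hc1ne with k1 hk1
    lift Order.height c.2 to ℕ using hc2ne with k2 hk2
    have hsum : ka + kb ≤ n + 1 := by exact_mod_cast hab
    have hk1a : k1 ≤ ka := by exact_mod_cast hc1le
    have hk2b : k2 ≤ kb := by exact_mod_cast hc2le
    have hstrict' : k1 < ka ∨ k2 < kb := by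
      rcases hstrict with h | h
      · left; exact_mod_cast h
      · right; exact_mod_cast h
    have hcn : Order.height c ≤ (n : ℕ∞) := by
      have h12 : Order.height c.1 + Order.height c.2 ≤ (n : ℕ∞) := by
        rw [← hk1, ← hk2]
        have : k1 + k2 ≤ n := by omega
        exact_mod_cast this
      exact ih c.1 c.2 h12
    have hlen : p.length = p.eraseLast.length + 1 := by
      simp [RelSeries.eraseLast_length]; omega
    rw [hlen]
    have hll := Order.length_le_height_last (p := p.eraseLast)
    rw [hcdef] at hll
    calc ((p.eraseLast.length + 1 : ℕ) : ℕ∞) = (p.eraseLast.length : ℕ∞) + 1 := by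
          rw [Nat.cast_add, Nat.cast_one]
      _ ≤ (n : ℕ∞) + 1 := add_le_add (le_trans hll hcn) le_rfl
      _ = ((n+1 : ℕ) : ℕ∞) := by rw [Nat.cast_add, Nat.cast_one]

lemma height_prod_le (a : α) (b : β) :
    Order.height (a, b) ≤ Order.height a + Order.height b := by
  by_cases ha : Order.height a = ⊤
  · simp [ha, top_add]
  by_cases hb : Order.height b = ⊤
  · simp [hb, add_top]
  lift Order.height a to ℕ using ha with ka hka
  lift Order.height b to ℕ using hb with kb hkb
  have h1 : Order.height a + Order.height b ≤ ((ka + kb : ℕ) : ℕ∞) := by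
    rw [← hka, ← hkb]; exact_mod_cast le_rfl
  refine le_trans (height_prod_le_aux (ka + kb) a b h1) ?_
  exact_mod_cast le_rfl

end OrderLemmas

noncomputable def hgt (R M : Type*) [CommRing R] [AddCommGroup M] [Module R M] : ℕ∞ :=
  Order.height (⊤ : Submodule R M)

section ModLemmas

variable {R : Type*} [CommRing R]

lemma hgt_le_of_surjective {M N : Type*} [AddCommGroup M] [Module R M]
    [AddCommGroup N] [Module R N] (f : M →ₗ[R] N) (hf : Function.Surjective f) :
    hgt R N ≤ hgt R M := by
  have hm : Monotone (Submodule.comap f) := fun _ _ h => Submodule.comap_mono h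
  have hsm : StrictMono (Submodule.comap f) :=
    hm.strictMono_of_injective (Submodule.comap_injective_of_surjective hf)
  have := Order.height_le_height_apply_of_strictMono _ hsm (⊤ : Submodule R N)
  rwa [Submodule.comap_top] at this

lemma hgt_eq_of_equiv {M N : Type*} [AddCommGroup M] [Module R M]
    [AddCommGroup N] [Module R N] (e : M ≃ₗ[R] N) : hgt R M = hgt R N :=
  le_antisymm (hgt_le_of_surjective e.symm.toLinearMap e.symm.surjective)
    (hgt_le_of_surjective e.toLinearMap e.surjective)

lemma hgt_subadd {M : Type*} [AddCommGroup M] [Module R M] (N : Submodule R M) :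
    hgt R M ≤ hgt R N + hgt R (M ⧸ N) := by
  classical
  set f : Submodule R M → Submodule R N × Submodule R (M ⧸ N) :=
    fun A => (A.comap N.subtype, A.map N.mkQ) with hf
  have hmono : Monotone f := fun A B h =>
    ⟨Submodule.comap_mono h, Submodule.map_mono h⟩
  have hsm : StrictMono f := by
    intro A B hAB
    refine lt_of_le_of_ne (hmono hAB.le) ?_
    intro heq
    have h1 : A.comap N.subtype = B.comap N.subtype := congrArg Prod.fst heq
    have h2 : A.map N.mkQ = B.map N.mkQ := congrArg Prod.snd heq
    have hinf : N ⊓ A = N ⊓ B := by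
      rw [← Submodule.map_comap_subtype, ← Submodule.map_comap_subtype, h1]
    have hsup : A ⊔ N = B ⊔ N := by
      have := congrArg (Submodule.comap N.mkQ) h2
      rwa [Submodule.comap_map_eq, Submodule.comap_map_eq, Submodule.ker_mkQ] at this
    have hinf' : B ⊓ N ≤ A ⊓ N := by
      rw [inf_comm, ← hinf, inf_comm]
    have := sup_lt_sup_of_lt_of_inf_le_inf hAB hinf'
    rw [hsup] at this
    exact lt_irrefl _ this
  have hh := Order.height_le_height_apply_of_strictMono f hsm (⊤ : Submodule R M)
  have hft : f ⊤ = (⊤, ⊤) := by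
    rw [hf]
    refine Prod.ext ?_ ?_
    · simpa using Submodule.comap_subtype_self N
    · simp [Submodule.map_top, Submodule.range_mkQ]
  rw [hft] at hh
  exact hh.trans (height_prod_le _ _)

lemma hgt_subsingleton {M : Type*} [AddCommGroup M] [Module R M] [Subsingleton M] :
    hgt R M = 0 := by
  rw [hgt, Order.height_eq_zero]
  intro y _
  have : y = ⊤ := Subsingleton.elim _ _
  simp [this]

lemma hgt_simple {M : Type*} [AddCommGroup M] [Module R M] [IsSimpleModule R M] :
    hgt R M ≤ 1 := by
  rw [hgt]
  have : (1 : ℕ∞) = ((1 : ℕ) : ℕ∞) := rfl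
  rw [this, Order.height_le_coe_iff]
  intro y hy
  have : y = ⊥ := Or.resolve_right (eq_bot_or_eq_top y) hy.ne
  subst this
  simp

/-- cyclic module annihilated by `q` -/
lemma hgt_cyclic {M : Type*} [AddCommGroup M] [Module R M] (q : Ideal R) (w : M)
    (hw : Submodule.span R {w} = ⊤) (hann : ∀ c ∈ q, ∀ m : M, c • m = 0) :
    hgt R M ≤ hgt R (R ⧸ (q • (⊤ : Submodule R R))) := by
  set f := LinearMap.toSpanSingleton R M w with hfdef
  have hfsurj : Function.Surjective f := by
    rw [← LinearMap.range_eq_top, ← LinearMap.span_singleton_eq_range, hw]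
  have hker : q • (⊤ : Submodule R R) ≤ LinearMap.ker f := by
    refine Submodule.smul_le.mpr ?_
    intro c hc r _
    simp only [LinearMap.mem_ker]
    have : f (c • r) = c • (r • w) := by
      rw [hfdef]; simp [LinearMap.toSpanSingleton_apply, smul_smul, mul_comm]
    rw [this, hann c hc]
  have hsurj2 : Function.Surjective (Submodule.liftQ _ f hker) := by
    intro m
    obtain ⟨r, hr⟩ := hfsurj m
    exact ⟨Submodule.Quotient.mk r, by rw [Submodule.liftQ_apply]; exact hr⟩
  exact hgt_le_of_surjective _ hsurj2

/-- finitely generated module annihilated by `q` -/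
lemma hgt_fg_ann (q : Ideal R) :
    ∀ (u : ℕ) (M : Type*) [AddCommGroup M] [Module R M] (v : Fin u → M),
    Submodule.span R (Set.range v) = ⊤ → (∀ c ∈ q, ∀ m : M, c • m = 0) →
    hgt R M ≤ (u : ℕ∞) * hgt R (R ⧸ (q • (⊤ : Submodule R R))) := by
  intro u
  induction u with
  | zero =>
    intro M _ _ v hv _
    have hbt : (⊥ : Submodule R M) = ⊤ := by
      rw [← hv, Set.range_eq_empty v, Submodule.span_empty]
    have : Subsingleton M := by
      constructor
      intro a b
      have ha : a ∈ (⊥ : Submodule R M) := by rw [hbt]; trivial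
      have hb : b ∈ (⊥ : Submodule R M) := by rw [hbt]; trivial
      rw [Submodule.mem_bot] at ha hb
      rw [ha, hb]
    simp [hgt_subsingleton]
  | succ u ih =>
    intro M _ _ v hv hann
    set N : Submodule R M := Submodule.span R (Set.range (v ∘ Fin.castSucc)) with hN
    have hNle : ∀ i : Fin u, v i.castSucc ∈ N := fun i =>
      Submodule.subset_span ⟨i, rfl⟩
    set v' : Fin u → N := fun i => ⟨v i.castSucc, hNle i⟩ with hv'
    have hv'span : Submodule.span R (Set.range v') = ⊤ := by
      apply Submodule.map_injective_of_injective (Submodule.injective_subtype N)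
      rw [Submodule.map_span, Submodule.map_top, Submodule.range_subtype]
      congr 1
      rw [← Set.range_comp]
      rfl
    have hann' : ∀ c ∈ q, ∀ m : N, c • m = 0 := by
      intro c hc m
      ext
      exact hann c hc m
    have h1 : hgt R N ≤ (u : ℕ∞) * hgt R (R ⧸ (q • (⊤ : Submodule R R))) :=
      ih N v' hv'span hann'
    have h2 : hgt R (M ⧸ N) ≤ hgt R (R ⧸ (q • (⊤ : Submodule R R))) := by
      apply hgt_cyclic q (N.mkQ (v (Fin.last u)))
      · apply eq_top_iff.mpr
        have : (⊤ : Submodule R (M ⧸ N)) = Submodule.map N.mkQ ⊤ := by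
          rw [Submodule.map_top, Submodule.range_mkQ]
        rw [this, ← hv, Submodule.map_span]
        rw [Submodule.span_le]
        rintro _ ⟨_, ⟨i, rfl⟩, rfl⟩
        refine Fin.lastCases ?_ ?_ i
        · exact Submodule.subset_span rfl
        · intro j
          have h0 : N.mkQ (v j.castSucc) = 0 :=
            (Submodule.Quotient.mk_eq_zero N).mpr (hNle j)
          simp only [Submodule.mkQ_apply] at h0 ⊢
          rw [h0]
          exact Submodule.zero_mem _
      · intro c hc m
        obtain ⟨x, rfl⟩ := Submodule.mkQ_surjective N m
        rw [Submodule.mkQ_apply, ← Submodule.Quotient.mk_smul, hann c hc,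
          Submodule.Quotient.mk_zero]
    calc hgt R M ≤ hgt R N + hgt R (M ⧸ N) := hgt_subadd N
      _ ≤ (u : ℕ∞) * hgt R (R ⧸ (q • (⊤ : Submodule R R)))
          + hgt R (R ⧸ (q • (⊤ : Submodule R R))) := add_le_add h1 h2
      _ = ((u + 1 : ℕ) : ℕ∞) * hgt R (R ⧸ (q • (⊤ : Submodule R R))) := by
          rw [Nat.cast_add, Nat.cast_one, add_mul, one_mul]

end ModLemmas

section Monomials

variable {R : Type*} [CommRing R] {M : Type*} [AddCommGroup M] [Module R M]

lemma prod_pow_single_add {d : ℕ} (x : Fin d → R) (a : Fin d → ℕ) (j : Fin d) :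
    (∏ j', x j' ^ (a j' + (Pi.single j 1 : Fin d → ℕ) j')) = x j * ∏ j', x j' ^ a j' := by
  rw [Finset.prod_congr rfl (fun j' _ => by rw [pow_add]),
    Finset.prod_mul_distrib, mul_comm]
  congr 1
  rw [Finset.prod_eq_single j (fun j' _ hj' => by
    rw [Pi.single_eq_of_ne hj', pow_zero]) (by simp), Pi.single_eq_same, pow_one]

/-- generating set of `q ^ n • ⊤` by monomials in the generators -/
lemma pow_smul_top_eq_span_monomials {d t : ℕ} (x : Fin d → R) (g : Fin t → M)
    (hg : Submodule.span R (Set.range g) = ⊤) (n : ℕ) :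
    (Ideal.span (Set.range x)) ^ n • (⊤ : Submodule R M) =
      Submodule.span R {w | ∃ a : Fin d → ℕ, (∑ j, a j) = n ∧
        ∃ l : Fin t, w = (∏ j, x j ^ a j) • g l} := by
  induction n with
  | zero =>
    rw [pow_zero, Ideal.one_eq_top, Submodule.top_smul, ← hg]
    congr 1
    ext w
    constructor
    · rintro ⟨l, rfl⟩
      exact ⟨0, by simp, l, by simp⟩
    · rintro ⟨a, ha, l, rfl⟩
      have ha' : a = 0 := by
        funext j
        exact (Finset.sum_eq_zero_iff.mp ha) j (Finset.mem_univ j)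
      refine ⟨l, ?_⟩
      rw [ha']
      simp
  | succ n ihn =>
    rw [pow_succ, mul_comm, mul_smul, ihn, Submodule.span_smul_span]
    apply le_antisymm
    · rw [Submodule.span_le]
      intro w hw
      rw [Set.mem_smul] at hw
      obtain ⟨s, ⟨j, rfl⟩, m, ⟨a, ha, l, rfl⟩, rfl⟩ := hw
      apply Submodule.subset_span
      refine ⟨a + Pi.single j 1, ?_, l, ?_⟩
      · simp only [Pi.add_apply]
        rw [Finset.sum_add_distrib, ha, Finset.sum_pi_single']
        simp
      · rw [smul_smul]
        congr 1
        rw [← prod_pow_single_add x a j]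
        exact Finset.prod_congr rfl (fun j' _ => by rw [Pi.add_apply])
    · rw [Submodule.span_le]
      rintro w ⟨b, hb, l, rfl⟩
      have hbne : ∃ j, b j ≠ 0 := by
        by_contra hno
        push_neg at hno
        have : (∑ j, b j) = 0 := Finset.sum_eq_zero (fun j _ => hno j)
        omega
      obtain ⟨j, hj⟩ := hbne
      have hbj : 1 ≤ b j := Nat.one_le_iff_ne_zero.mpr hj
      set a : Fin d → ℕ := b - Pi.single j 1 with hadef
      have hab : a + Pi.single j 1 = b := by
        funext j'
        by_cases hjj : j' = j
        · subst hjj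
          simp [hadef, Nat.sub_add_cancel hbj]
        · simp [hadef, Pi.single_eq_of_ne hjj]
      have hsa : (∑ j', a j') = n := by
        have h2 := congrArg (fun f => ∑ j', f j') hab
        simp only [Pi.add_apply] at h2
        rw [Finset.sum_add_distrib, Finset.sum_pi_single'] at h2
        simp only [Finset.mem_univ, if_true] at h2
        omega
      apply Submodule.subset_span
      rw [Set.mem_smul]
      refine ⟨x j, ⟨j, rfl⟩, (∏ j', x j' ^ a j') • g l, ⟨a, hsa, l, rfl⟩, ?_⟩
      rw [smul_smul]
      congr 1
      have h3 := prod_pow_single_add x a j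
      rw [← h3]
      refine Finset.prod_congr rfl (fun j' _ => ?_)
      have : b j' = a j' + (Pi.single j 1 : Fin d → ℕ) j' := by
        rw [← hab]; simp
      rw [this]

end Monomials


section Master

variable {R : Type*} [CommRing R] {M : Type*} [AddCommGroup M] [Module R M]

lemma master {d t : ℕ} (x : Fin d → R) (g : Fin t → M)
    (hg : Submodule.span R (Set.range g) = ⊤) (n : ℕ) :
    hgt R (M ⧸ ((Ideal.span (Set.range x)) ^ n • (⊤ : Submodule R M))) ≤
      ((∑ i ∈ Finset.range n, t * (Finset.Nat.antidiagonalTuple d i).card : ℕ) : ℕ∞) *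
        hgt R (R ⧸ (Ideal.span (Set.range x) • (⊤ : Submodule R R))) := by
  set q : Ideal R := Ideal.span (Set.range x) with hq
  induction n with
  | zero =>
    have he : (q ^ 0 • ⊤ : Submodule R M) = ⊤ := by
      rw [pow_zero, Ideal.one_eq_top, Submodule.top_smul]
    have : Subsingleton (M ⧸ (q ^ 0 • ⊤ : Submodule R M)) :=
      Submodule.Quotient.subsingleton_iff.mpr he
    rw [hgt_subsingleton]
    exact zero_le
  | succ n ihn =>
    set T : ℕ → Submodule R M := fun k => q ^ k • ⊤ with hT
    have hsub : T (n+1) ≤ T n :=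
      Submodule.smul_mono_left (Ideal.pow_le_pow_right (Nat.le_succ n))
    set N' : Submodule R (M ⧸ T (n+1)) := (T n).map (T (n+1)).mkQ with hN'
    -- the top quotient is iso to M ⧸ T n
    have e := Submodule.quotientQuotientEquivQuotient (T (n+1)) (T n) hsub
    have h2 : hgt R ((M ⧸ T (n+1)) ⧸ N') ≤ hgt R (M ⧸ T n) :=
      hgt_le_of_surjective e.symm.toLinearMap e.symm.surjective
    -- the layer N' is annihilated by q and generated by monomials of degree n
    have hann : ∀ c ∈ q, ∀ w : N', c • w = (0 : N') := by
      intro c hc w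
      have hqN : q • N' = ⊥ := by
        rw [hN', ← Submodule.map_smul'']
        have : q • T n = T (n+1) := by
          rw [hT]
          simp only
          rw [pow_succ, mul_comm, mul_smul]
        rw [this]
        rw [eq_bot_iff, Submodule.map_le_iff_le_comap]
        intro y hy
        simp only [Submodule.comap_bot, LinearMap.mem_ker, Submodule.mkQ_apply,
          Submodule.Quotient.mk_eq_zero]
        exact hy
      have : c • (w : M ⧸ T (n+1)) ∈ q • N' := Submodule.smul_mem_smul hc w.2
      rw [hqN, Submodule.mem_bot] at this
      exact Subtype.ext this
    -- generators of N'
    have hFmem : ∀ (p : {a : Fin d → ℕ // a ∈ Finset.Nat.antidiagonalTuple d n} × Fin t), (T (n+1)).mkQ ((∏ j, x j ^ (p.1 : Fin d → ℕ) j) • g p.2) ∈ N' := by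
      intro p
      apply Submodule.mem_map_of_mem
      rw [hT]
      simp only
      rw [pow_smul_top_eq_span_monomials x g hg n]
      apply Submodule.subset_span
      exact ⟨p.1, Finset.Nat.mem_antidiagonalTuple.mp p.1.2, p.2, rfl⟩
    set F : ({a : Fin d → ℕ // a ∈ Finset.Nat.antidiagonalTuple d n} × Fin t) → N' :=
      fun p => ⟨_, hFmem p⟩ with hF
    have hFspan : Submodule.span R (Set.range F) = ⊤ := by
      apply Submodule.map_injective_of_injective (Submodule.injective_subtype N')
      rw [Submodule.map_span, Submodule.map_top, Submodule.range_subtype]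
      have himg : N'.subtype '' Set.range F =
          (T (n+1)).mkQ '' {w | ∃ a : Fin d → ℕ, (∑ j, a j) = n ∧
            ∃ l : Fin t, w = (∏ j, x j ^ a j) • g l} := by
        ext w
        constructor
        · rintro ⟨_, ⟨p, rfl⟩, rfl⟩
          exact ⟨_, ⟨p.1, Finset.Nat.mem_antidiagonalTuple.mp p.1.2, p.2, rfl⟩, rfl⟩
        · rintro ⟨_, ⟨a, ha, l, rfl⟩, rfl⟩
          exact ⟨F ⟨⟨a, Finset.Nat.mem_antidiagonalTuple.mpr ha⟩, l⟩, ⟨_, rfl⟩, rfl⟩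
      rw [himg, ← Submodule.map_span, ← pow_smul_top_eq_span_monomials x g hg n]
    have hcard : hgt R N' ≤ ((t * (Finset.Nat.antidiagonalTuple d n).card : ℕ) : ℕ∞) *
        hgt R (R ⧸ (q • (⊤ : Submodule R R))) := by
      have hcardι : Fintype.card ({a : Fin d → ℕ // a ∈ Finset.Nat.antidiagonalTuple d n} × Fin t)
          = t * (Finset.Nat.antidiagonalTuple d n).card := by
        rw [Fintype.card_prod, Fintype.card_coe, Fintype.card_fin, mul_comm]
      have := hgt_fg_ann q (Fintype.card _) N' (F ∘ (Fintype.equivFin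
          ({a : Fin d → ℕ // a ∈ Finset.Nat.antidiagonalTuple d n} × Fin t)).symm)
        (by rw [Set.range_comp, Equiv.range_eq_univ, Set.image_univ, hFspan]) hann
      rwa [hcardι] at this
    calc hgt R (M ⧸ T (n+1)) ≤ hgt R N' + hgt R ((M ⧸ T (n+1)) ⧸ N') := hgt_subadd N'
      _ ≤ ((t * (Finset.Nat.antidiagonalTuple d n).card : ℕ) : ℕ∞) *
            hgt R (R ⧸ (q • (⊤ : Submodule R R)))
          + ((∑ i ∈ Finset.range n, t * (Finset.Nat.antidiagonalTuple d i).card : ℕ) : ℕ∞) *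
            hgt R (R ⧸ (q • (⊤ : Submodule R R))) := add_le_add hcard (h2.trans ihn)
      _ = _ := by
          rw [← add_mul, Finset.sum_range_succ, ← Nat.cast_add]
          congr 2
          omega

lemma antidiagonal_count (d n : ℕ) (hn : 1 ≤ n) :
    (∑ i ∈ Finset.range n, (Finset.Nat.antidiagonalTuple d i).card) ≤ n ^ d := by
  classical
  rw [← Finset.card_biUnion]
  · set S := (Finset.range n).biUnion (Finset.Nat.antidiagonalTuple d) with hS
    have hemb : ∀ a ∈ S, ∀ j : Fin d, a j < n := by
      intro a ha j
      rw [hS, Finset.mem_biUnion] at ha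
      obtain ⟨i, hi, hai⟩ := ha
      rw [Finset.Nat.mem_antidiagonalTuple] at hai
      calc a j ≤ ∑ j', a j' := Finset.single_le_sum (fun _ _ => Nat.zero_le _) (Finset.mem_univ j)
        _ = i := hai
        _ < n := Finset.mem_range.mp hi
    have := Finset.card_le_card_of_injOn (f := fun (a : Fin d → ℕ) => fun j : Fin d =>
        (⟨min (a j) (n-1), by omega⟩ : Fin n)) (s := S) (t := Finset.univ)
      (fun a _ => Finset.mem_univ _) ?_
    · calc S.card ≤ (Finset.univ : Finset (Fin d → Fin n)).card := this
        _ = n ^ d := by rw [Finset.card_univ]; simp [Fintype.card_fun]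
    · intro a ha b hb hab
      funext j
      have h1 := congrFun hab j
      simp only [Fin.mk.injEq] at h1
      have ha' := hemb a ha j
      have hb' := hemb b hb j
      omega
  · intro i _ j _ hij
    simp only [Finset.disjoint_left]
    intro a hai haj
    rw [Finset.Nat.mem_antidiagonalTuple] at hai haj
    exact hij (hai ▸ haj)

end Master

section SOP

universe u

variable {R : Type u} [CommRing R] [IsLocalRing R] [IsNoetherianRing R]

lemma sop_aux : ∀ (e : ℕ) (J : Ideal R), J ≤ maximalIdeal R →
    (∀ p : LTSeries (PrimeSpectrum R), J ≤ p.head.asIdeal → (p.length : ℕ) ≤ e) →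
    ∃ x : Fin e → R, (∀ i, x i ∈ maximalIdeal R) ∧
      maximalIdeal R ≤ (J ⊔ Ideal.span (Set.range x)).radical := by
  intro e
  induction e with
  | zero =>
    intro J hJm hchain
    refine ⟨![], fun i => i.elim0, ?_⟩
    have hrad : J.radical = maximalIdeal R := by
      have hprime : ∀ P : Ideal R, P.IsPrime → J ≤ P → P = maximalIdeal R := by
        intro P hP hJP
        by_contra hne
        have hPm : P ≤ maximalIdeal R := le_maximalIdeal hP.ne_top
        have hlt : P < maximalIdeal R := lt_of_le_of_ne hPm hne
        have hmax : (maximalIdeal R).IsPrime := (maximalIdeal.isMaximal R).isPrime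
        set p : LTSeries (PrimeSpectrum R) :=
          (RelSeries.singleton _ (⟨maximalIdeal R, hmax⟩ : PrimeSpectrum R)).cons
            ⟨P, hP⟩ (by show (_ : PrimeSpectrum R) < _; rw [← PrimeSpectrum.asIdeal_lt_asIdeal]; exact hlt) with hp
        have := hchain p (by rw [hp]; simpa using hJP)
        simp [hp] at this
      rw [Ideal.radical_eq_sInf]
      apply le_antisymm
      · apply sInf_le
        exact ⟨hJm, (maximalIdeal.isMaximal R).isPrime⟩
      · apply le_sInf
        rintro P ⟨hJP, hP⟩
        rw [hprime P hP hJP]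
    have : Ideal.span (Set.range ![]) = (⊥ : Ideal R) := by
      rw [show (Set.range ![] : Set R) = ∅ by simp, Ideal.span_empty]
    rw [this, sup_bot_eq, hrad]
  | succ e ih =>
    intro J hJm hchain
    by_cases hall : ∀ P : Ideal R, P.IsPrime → J ≤ P → P = maximalIdeal R
    · -- radical J = m already, pad with zeros
      refine ⟨fun _ => 0, fun _ => zero_mem _, ?_⟩
      have hrad : J.radical = maximalIdeal R := by
        rw [Ideal.radical_eq_sInf]
        apply le_antisymm
        · exact sInf_le ⟨hJm, (maximalIdeal.isMaximal R).isPrime⟩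
        · exact le_sInf (by rintro P ⟨hJP, hP⟩; rw [hall P hP hJP])
      calc maximalIdeal R = J.radical := hrad.symm
        _ ≤ (J ⊔ Ideal.span (Set.range (fun _ : Fin (e+1) => (0:R)))).radical :=
          Ideal.radical_mono le_sup_left
    · push_neg at hall
      obtain ⟨P0, hP0prime, hJP0, hP0ne⟩ := hall
      -- minimal primes over J, all ≠ m
      have hfin : J.minimalPrimes.Finite := by
        rw [Ideal.minimalPrimes_eq_comap]
        exact Set.Finite.image _ (minimalPrimes.finite_of_isNoetherianRing _)
      have hne_m : ∀ P ∈ J.minimalPrimes, P < maximalIdeal R := by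
        intro P hP
        have hPprime : P.IsPrime := hP.1.1
        have hPle : P ≤ maximalIdeal R := le_maximalIdeal hPprime.ne_top
        refine lt_of_le_of_ne hPle ?_
        rintro rfl
        -- then m minimal over J, but P0 is a prime over J with P0 ≠ m, P0 ≤ m
        have hP0le : P0 ≤ maximalIdeal R := le_maximalIdeal hP0prime.ne_top
        have := hP.2 (y := P0) ⟨hP0prime, hJP0⟩ hP0le
        exact hP0ne (le_antisymm hP0le this)
      -- prime avoidance
      obtain ⟨a, ham, hanot⟩ : ∃ a ∈ maximalIdeal R, ∀ P ∈ J.minimalPrimes, a ∉ P := by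
        classical
        set s : Finset (Ideal R) := hfin.toFinset with hs
        have hsub : ¬((maximalIdeal R : Set R) ⊆ ⋃ P ∈ (s : Set (Ideal R)), ↑P) := by
          rw [Ideal.subset_union_prime ⊥ ⊥ (fun P hP _ _ => by
            rw [hs, Set.Finite.mem_toFinset] at hP
            exact hP.1.1)]
          rintro ⟨P, hPs, hmP⟩
          rw [hs, Set.Finite.mem_toFinset] at hPs
          exact absurd (le_antisymm (le_maximalIdeal (hne_m P hPs).ne_top
            |>.trans (le_refl _)) hmP ▸ hne_m P hPs) (lt_irrefl _)
        rw [Set.not_subset] at hsub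
        obtain ⟨a, ham, hnot⟩ := hsub
        refine ⟨a, ham, fun P hP haP => hnot ?_⟩
        simp only [Set.mem_iUnion]
        exact ⟨P, by rw [hs]; exact ⟨Set.Finite.mem_toFinset hfin |>.mpr hP, haP⟩⟩
      -- new ideal
      set J' := J ⊔ Ideal.span {a} with hJ'
      have hJ'm : J' ≤ maximalIdeal R := by
        rw [hJ']
        exact sup_le hJm ((Ideal.span_singleton_le_iff_mem _).mpr ham)
      have hchain' : ∀ p : LTSeries (PrimeSpectrum R), J' ≤ p.head.asIdeal →
          (p.length : ℕ) ≤ e := by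
        intro p hp
        have hJhead : J ≤ p.head.asIdeal := le_sup_left.trans hp
        have hahead : a ∈ p.head.asIdeal :=
          hp (le_sup_right.trans_eq hJ'.symm (Ideal.mem_span_singleton_self a) : _)
        obtain ⟨Pm, hPmmin, hPmle⟩ :=
          Ideal.exists_minimalPrimes_le (J := p.head.asIdeal) hJhead
        have hPmprime : Pm.IsPrime := hPmmin.1.1
        have hPmlt : Pm < p.head.asIdeal :=
          lt_of_le_of_ne hPmle (fun h => hanot Pm hPmmin (h ▸ hahead))
        set p' := p.cons ⟨Pm, hPmprime⟩
          (by show (_ : PrimeSpectrum R) < _; rw [← PrimeSpectrum.asIdeal_lt_asIdeal]; exact hPmlt) with hp'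
        have := hchain p' (by
          rw [hp', RelSeries.head_cons]
          exact hPmmin.1.2)
        rw [hp'] at this
        simp [RelSeries.cons_length] at this
        omega
      obtain ⟨x, hxm, hxrad⟩ := ih J' hJ'm hchain'
      refine ⟨Fin.cons a x, ?_, ?_⟩
      · intro i
        refine Fin.cases ham (fun j => hxm j) i
      · have : J ⊔ Ideal.span (Set.range (Fin.cons a x)) = J' ⊔ Ideal.span (Set.range x) := by
          rw [hJ', Fin.range_cons, Ideal.span_insert, ← sup_assoc]
        rw [this]
        exact hxrad

end SOP


section Growth

variable {R : Type*} [CommRing R] [IsLocalRing R] [IsNoetherianRing R]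
variable {M : Type*} [AddCommGroup M] [Module R M]

/-- quotient by a bigger ideal has smaller length -/
lemma hgt_quot_mono {I J : Ideal R} (h : I ≤ J) :
    hgt R (M ⧸ (J • ⊤ : Submodule R M)) ≤ hgt R (M ⧸ (I • ⊤ : Submodule R M)) := by
  have hle : (I • ⊤ : Submodule R M) ≤ J • ⊤ := Submodule.smul_mono_left h
  refine hgt_le_of_surjective (Submodule.mapQ _ _ LinearMap.id hle) ?_
  intro y
  obtain ⟨x, rfl⟩ := Submodule.mkQ_surjective _ y
  exact ⟨Submodule.Quotient.mk x, rfl⟩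

lemma hgt_res_field : hgt R (R ⧸ ((maximalIdeal R) • (⊤ : Submodule R R))) ≤ 1 := by
  have hsm : ((maximalIdeal R) • (⊤ : Submodule R R)) = (maximalIdeal R : Submodule R R) := by
    apply le_antisymm
    · refine Submodule.smul_le.mpr ?_
      intro c hc r _
      rw [smul_eq_mul]
      exact Ideal.mul_mem_right r _ hc
    · intro c hc
      simpa using Submodule.smul_mem_smul hc (Submodule.mem_top (x := (1:R)))
  have hsimple : IsSimpleModule R (R ⧸ ((maximalIdeal R) • (⊤ : Submodule R R))) := by
    rw [hsm]
    exact isSimpleModule_iff_isCoatom.mpr (Ideal.isMaximal_def.mp (maximalIdeal.isMaximal R))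
  exact hgt_simple

theorem growth_bound [Module.Finite R M] (d : ℕ) (hd : ringKrullDim R = d) :
    ∃ A : ℕ, ∀ (I : Ideal R) (k : ℕ), 1 ≤ k → (maximalIdeal R) ^ k ≤ I →
      hgt R (M ⧸ (I • ⊤ : Submodule R M)) ≤ ((A * k ^ d : ℕ) : ℕ∞) := by
  classical
  -- system of parameters
  have hchain : ∀ p : LTSeries (PrimeSpectrum R), (⊥ : Ideal R) ≤ p.head.asIdeal →
      (p.length : ℕ) ≤ d := by
    intro p _
    have := Order.LTSeries.length_le_krullDim p
    rw [show Order.krullDim (PrimeSpectrum R) = ringKrullDim R from rfl, hd] at this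
    exact_mod_cast this
  obtain ⟨x, hxm, hxrad⟩ := sop_aux d ⊥ bot_le hchain
  set Q : Ideal R := Ideal.span (Set.range x) with hQ
  have hQm : Q ≤ maximalIdeal R := by
    rw [hQ, Ideal.span_le]
    rintro _ ⟨i, rfl⟩
    exact hxm i
  have hmrad : maximalIdeal R ≤ Q.radical := by rwa [bot_sup_eq] at hxrad
  obtain ⟨k0, hk0⟩ : ∃ k0, (maximalIdeal R) ^ k0 ≤ Q :=
    Ideal.exists_pow_le_of_le_radical_of_fg hmrad (IsNoetherian.noetherian _)
  -- generators of m
  obtain ⟨e, ys, hys⟩ := (Submodule.fg_iff_exists_fin_generating_family).mp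
    (IsNoetherian.noetherian (maximalIdeal R))
  -- generators of M
  obtain ⟨t, g, hg⟩ := (Submodule.fg_iff_exists_fin_generating_family).mp
    (Module.Finite.fg_top (R := R) (M := M))
  -- one generator of R
  have h1 : Submodule.span R (Set.range (fun _ : Fin 1 => (1:R))) = ⊤ := by
    rw [show Set.range (fun _ : Fin 1 => (1:R)) = {1} by simp]
    exact eq_top_iff.mpr (fun y _ => Submodule.mem_span_singleton.mpr ⟨y, by simp⟩)
  -- bound for R/m^j
  have hRm : ∀ j : ℕ, hgt R (R ⧸ ((maximalIdeal R) ^ j • (⊤ : Submodule R R))) ≤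
      ((∑ i ∈ Finset.range j, (Finset.Nat.antidiagonalTuple e i).card : ℕ) : ℕ∞) := by
    intro j
    have hys' : Ideal.span (Set.range ys) = maximalIdeal R := hys
    have := master (M := R) ys (fun _ : Fin 1 => (1:R)) h1 j
    rw [hys'] at this
    refine this.trans ?_
    have := hgt_res_field (R := R)
    calc ((∑ i ∈ Finset.range j, 1 * (Finset.Nat.antidiagonalTuple e i).card : ℕ) : ℕ∞) *
          hgt R (R ⧸ ((maximalIdeal R) • (⊤ : Submodule R R)))
        ≤ ((∑ i ∈ Finset.range j, 1 * (Finset.Nat.antidiagonalTuple e i).card : ℕ) : ℕ∞) * 1 :=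
          mul_le_mul_right hgt_res_field _
      _ = _ := by
          rw [mul_one]
          congr 1
          exact Finset.sum_congr rfl (fun i _ => one_mul _)
  -- C_Q bound
  set c0 : ℕ := ∑ i ∈ Finset.range k0, (Finset.Nat.antidiagonalTuple e i).card with hc0
  have hCQ : hgt R (R ⧸ (Q • (⊤ : Submodule R R))) ≤ (c0 : ℕ∞) := by
    refine le_trans ?_ (hRm k0)
    have : (maximalIdeal R) ^ k0 • (⊤ : Submodule R R) ≤ Q • ⊤ := Submodule.smul_mono_left hk0
    exact hgt_quot_mono hk0
  refine ⟨t * c0, ?_⟩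
  intro I k hk hmkI
  have hQk : Q ^ k ≤ (maximalIdeal R) ^ k := Ideal.pow_right_mono hQm k
  calc hgt R (M ⧸ (I • ⊤ : Submodule R M))
      ≤ hgt R (M ⧸ ((maximalIdeal R) ^ k • ⊤ : Submodule R M)) := hgt_quot_mono hmkI
    _ ≤ hgt R (M ⧸ (Q ^ k • ⊤ : Submodule R M)) := hgt_quot_mono hQk
    _ ≤ ((∑ i ∈ Finset.range k, t * (Finset.Nat.antidiagonalTuple d i).card : ℕ) : ℕ∞) *
        hgt R (R ⧸ (Q • (⊤ : Submodule R R))) := master x g hg k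
    _ ≤ ((∑ i ∈ Finset.range k, t * (Finset.Nat.antidiagonalTuple d i).card : ℕ) : ℕ∞) *
        (c0 : ℕ∞) := mul_le_mul_right hCQ _
    _ ≤ ((t * k ^ d : ℕ) : ℕ∞) * (c0 : ℕ∞) := by
        apply mul_le_mul_left
        have : (∑ i ∈ Finset.range k, t * (Finset.Nat.antidiagonalTuple d i).card : ℕ)
            ≤ t * k ^ d := by
          rw [← Finset.mul_sum]
          exact Nat.mul_le_mul_left t (antidiagonal_count d k hk)
        exact_mod_cast this
    _ = ((t * c0 * k ^ d : ℕ) : ℕ∞) := by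
        rw [← Nat.cast_mul]
        congr 1
        ring

end Growth





section Bridge

variable {R : Type*} [CommRing R]

lemma modLength_eq_hgt (M : Type*) [AddCommGroup M] [Module R M] :
    modLength R M = ((hgt R M).toNat : ℝ) := by
  rw [modLength, hgt, ← Order.height_top_eq_krullDim, WithBot.unbotD_coe]

lemma modLength_nonneg (M : Type*) [AddCommGroup M] [Module R M] :
    0 ≤ modLength R M := by
  rw [modLength_eq_hgt]; positivity

lemma modLength_le_of_hgt_le {M : Type*} [AddCommGroup M] [Module R M] {A : ℕ}
    (h : hgt R M ≤ (A : ℕ∞)) : modLength R M ≤ (A : ℝ) := by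
  rw [modLength_eq_hgt]
  have := ENat.toNat_le_toNat h (by simp)
  rw [ENat.toNat_coe] at this
  exact_mod_cast this

lemma modLength_mono {V W : Type*} [AddCommGroup V] [Module R V] [AddCommGroup W] [Module R W]
    (h : hgt R V ≤ hgt R W) (hW : hgt R W ≠ ⊤) :
    modLength R V ≤ modLength R W := by
  rw [modLength_eq_hgt, modLength_eq_hgt]
  exact_mod_cast ENat.toNat_le_toNat h hW

end Bridge


/-- Let `R` be a `d`-dimensional Noetherian local ring, `𝓘 = {I_n}` a
graded `m_R`-family, `M` a finitely generated `R`-module.  Then `vol(𝓘; M) ≤ e(𝓘; M)`,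
where `vol(𝓘; M) = limsup d! ℓ(M/I_n M)/nᵈ` and `e(𝓘; M) = lim e(I_n; M)/nᵈ`. -/
theorem volume_le_multiplicity
    {R : Type*} [CommRing R] [IsLocalRing R] [IsNoetherianRing R] (d : ℕ)
    (hd : ringKrullDim R = d) (𝓘 : GradedFamily R)
    (M : Type*) [AddCommGroup M] [Module R M] [Module.Finite R M] (L : ℝ)
    (hL : Tendsto (fun n : ℕ => hsMultMod d (𝓘.I n) M / (n : ℝ) ^ d) atTop (nhds L)) :
    Filter.limsup
      (fun n : ℕ => (Nat.factorial d : ℝ) *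
        modLength R (M ⧸ (𝓘.I n • (⊤ : Submodule R M))) / (n : ℝ) ^ d)
      Filter.atTop ≤ L := by
  classical
  obtain ⟨A, hA⟩ := growth_bound (R := R) (M := M) d hd
  -- the exponent function for each ideal in the family
  have hkb : ∀ n : ℕ, 0 < n → ∃ k : ℕ, 1 ≤ k ∧ (maximalIdeal R) ^ k ≤ 𝓘.I n := by
    intro n hn
    obtain ⟨k, hk⟩ := (𝓘.primary n hn).1
    exact ⟨max k 1, le_max_right _ _,
      le_trans (Ideal.pow_le_pow_right (le_max_left _ _)) hk⟩
  set kb : ℕ → ℕ := fun n => if hn : 0 < n then (hkb n hn).choose else 1 with hkbdef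
  have hkb1 : ∀ n, 1 ≤ kb n := by
    intro n
    simp only [hkbdef]
    by_cases hn : 0 < n
    · rw [dif_pos hn]; exact (hkb n hn).choose_spec.1
    · rw [dif_neg hn]
  have hkble : ∀ n, 0 < n → (maximalIdeal R) ^ (kb n) ≤ 𝓘.I n := by
    intro n hn
    simp only [hkbdef]
    rw [dif_pos hn]
    exact (hkb n hn).choose_spec.2
  -- length bound for powers of family ideals
  have hlen : ∀ (p m : ℕ), 0 < p → 1 ≤ m →
      hgt R (M ⧸ ((𝓘.I p) ^ m • ⊤ : Submodule R M)) ≤ ((A * (kb p * m) ^ d : ℕ) : ℕ∞) := by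
    intro p m hp hm
    apply hA
    · exact Nat.mul_pos (hkb1 p) hm
    · calc (maximalIdeal R) ^ (kb p * m) = ((maximalIdeal R) ^ (kb p)) ^ m := by
            rw [← pow_mul]
        _ ≤ (𝓘.I p) ^ m := Ideal.pow_right_mono (hkble p hp) m
  -- nonnegativity of the sequence
  set g : ℕ → ℝ := fun n => (Nat.factorial d : ℝ) *
      modLength R (M ⧸ (𝓘.I n • (⊤ : Submodule R M))) / (n : ℝ) ^ d with hg
  have hg0 : ∀ n, 0 ≤ g n := by
    intro n
    rw [hg]
    have := modLength_nonneg (R := R) (M ⧸ (𝓘.I n • (⊤ : Submodule R M)))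
    positivity
  -- main estimate
  refine le_of_forall_pos_le_add ?_
  intro ε hε
  -- choose p
  obtain ⟨p, hp1, hpe⟩ : ∃ p : ℕ, 1 ≤ p ∧ hsMultMod d (𝓘.I p) M / (p : ℝ) ^ d < L + ε / 2 := by
    have h1 : ∀ᶠ n in atTop, hsMultMod d (𝓘.I n) M / (n : ℝ) ^ d < L + ε / 2 :=
      hL.eventually (eventually_lt_nhds (by linarith))
    obtain ⟨p, hp1, hp2⟩ := (h1.and (eventually_ge_atTop 1)).exists
    exact ⟨p, hp2, hp1⟩
  set F : ℕ → ℝ := fun m => (Nat.factorial d : ℝ) *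
      modLength R (M ⧸ ((𝓘.I p) ^ m • (⊤ : Submodule R M))) / (m : ℝ) ^ d with hF
  have hEdef : hsMultMod d (𝓘.I p) M = limsup F atTop := rfl
  set E := hsMultMod d (𝓘.I p) M with hE
  -- boundedness of F
  set Cp : ℝ := (Nat.factorial d : ℝ) * A * (kb p : ℝ) ^ d with hCp
  have hFbound : ∀ m : ℕ, 1 ≤ m → F m ≤ Cp := by
    intro m hm
    have hb := hlen p m hp1 hm
    have hb' : modLength R (M ⧸ ((𝓘.I p) ^ m • (⊤ : Submodule R M)))
        ≤ ((A * (kb p * m) ^ d : ℕ) : ℝ) := modLength_le_of_hgt_le hb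
    rw [hF]
    have hmpos : (0:ℝ) < (m:ℝ) ^ d := by positivity
    rw [div_le_iff₀ hmpos]
    calc (Nat.factorial d : ℝ) * modLength R (M ⧸ ((𝓘.I p) ^ m • (⊤ : Submodule R M)))
        ≤ (Nat.factorial d : ℝ) * ((A * (kb p * m) ^ d : ℕ) : ℝ) := by
          exact mul_le_mul_of_nonneg_left hb' (by positivity)
      _ = Cp * (m : ℝ) ^ d := by
          rw [hCp]
          push_cast
          ring
  have hFb : IsBoundedUnder (· ≤ ·) atTop F :=
    ⟨Cp, by
      rw [eventually_map]
      filter_upwards [eventually_ge_atTop 1] with m hm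
      exact hFbound m hm⟩
  have hF0 : ∀ m, 0 ≤ F m := by
    intro m
    rw [hF]
    have := modLength_nonneg (R := R) (M ⧸ ((𝓘.I p) ^ m • (⊤ : Submodule R M)))
    positivity
  have hE0 : 0 ≤ E := by
    rw [hEdef]
    exact le_limsup_of_frequently_le (Frequently.of_forall hF0) hFb
  -- the constant c
  obtain ⟨c, hc1, hcprop⟩ : ∃ c : ℕ, 1 ≤ c ∧ ∀ r : ℕ, 1 ≤ r → r < p → (𝓘.I p) ^ c ≤ 𝓘.I r := by
    refine ⟨1 + (Finset.range p).sup kb, le_add_right le_rfl, ?_⟩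
    intro r hr hrp
    have hkr : kb r ≤ 1 + (Finset.range p).sup kb :=
      le_add_left (Finset.le_sup (Finset.mem_range.mpr hrp))
    calc (𝓘.I p) ^ (1 + (Finset.range p).sup kb)
        ≤ (maximalIdeal R) ^ (1 + (Finset.range p).sup kb) :=
          Ideal.pow_right_mono (𝓘.primary p hp1).2 _
      _ ≤ (maximalIdeal R) ^ (kb r) := Ideal.pow_le_pow_right hkr
      _ ≤ 𝓘.I r := hkble r hr
  -- key containment
  have hIpow : ∀ q : ℕ, (𝓘.I p) ^ q ≤ 𝓘.I (p * q) := by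
    intro q
    induction q with
    | zero => rw [pow_zero, Nat.mul_zero, 𝓘.I_zero, Ideal.one_eq_top]
    | succ q ih =>
      calc (𝓘.I p) ^ (q + 1) = (𝓘.I p) ^ q * 𝓘.I p := pow_succ _ _
        _ ≤ 𝓘.I (p * q) * 𝓘.I p := Ideal.mul_mono_left ih
        _ ≤ 𝓘.I (p * q + p) := 𝓘.mul_le _ _
        _ = 𝓘.I (p * (q + 1)) := by ring_nf
  have hkey : ∀ k : ℕ, 1 ≤ k → (𝓘.I p) ^ (k / p + c) ≤ 𝓘.I k := by
    intro k hk
    have hmod := Nat.div_add_mod k p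
    rcases Nat.eq_zero_or_pos (k % p) with hr | hr
    · have hkeq : p * (k / p) = k := by omega
      calc (𝓘.I p) ^ (k / p + c) ≤ (𝓘.I p) ^ (k / p) :=
            Ideal.pow_le_pow_right (Nat.le_add_right _ _)
        _ ≤ 𝓘.I (p * (k / p)) := hIpow _
        _ = 𝓘.I k := by rw [hkeq]
    · have hrp : k % p < p := Nat.mod_lt _ hp1
      calc (𝓘.I p) ^ (k / p + c) = (𝓘.I p) ^ (k / p) * (𝓘.I p) ^ c := pow_add _ _ _
        _ ≤ 𝓘.I (p * (k / p)) * 𝓘.I (k % p) :=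
            Ideal.mul_mono (hIpow _) (hcprop _ hr hrp)
        _ ≤ 𝓘.I (p * (k / p) + k % p) := 𝓘.mul_le _ _
        _ = 𝓘.I k := by rw [hmod]
  -- now the eventual bound
  set δ : ℝ := ε / 4 with hδ
  have hδpos : 0 < δ := by rw [hδ]; linarith
  -- eventually F (k/p + c) ≤ E + δ
  have hmk_tendsto : Tendsto (fun k : ℕ => k / p + c) atTop atTop := by
    apply tendsto_atTop.mpr
    intro b
    rw [eventually_atTop]
    refine ⟨p * b, fun k hk => ?_⟩
    have : b ≤ k / p := (Nat.le_div_iff_mul_le hp1).mpr (by rw [Nat.mul_comm]; exact hk)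
    omega
  have hFev : ∀ᶠ m in atTop, F m < E + δ := by
    apply eventually_lt_of_limsup_lt
    · rw [hEdef]; linarith [hδpos]
    · exact hFb
  have hFev' : ∀ᶠ k in atTop, F (k / p + c) < E + δ := hmk_tendsto.eventually hFev
  -- eventually the ratio bound
  have hhtendsto : Tendsto (fun k : ℕ => (E + δ) * ((1:ℝ) / p + c / k) ^ d) atTop
      (nhds ((E + δ) * ((1:ℝ) / p) ^ d)) := by
    have h1 : Tendsto (fun k : ℕ => (1:ℝ) / p + c / k) atTop (nhds ((1:ℝ) / p)) := by
      have := tendsto_const_div_atTop_nhds_zero_nat (c : ℝ)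
      have h2 := (tendsto_const_nhds (x := (1:ℝ)/p) (f := atTop)).add this
      simpa using h2
    exact (h1.pow d).const_mul _
  have hhev : ∀ᶠ k : ℕ in atTop, (E + δ) * ((1:ℝ) / p + (c:ℝ) / (k:ℝ)) ^ d ≤ (E + δ) * ((1:ℝ) / p) ^ d + δ :=
    hhtendsto.eventually (eventually_le_nhds (by linarith))
  -- pointwise comparison
  have hptwise : ∀ᶠ k in atTop, g k ≤ (E + δ) * ((1:ℝ) / p + c / k) ^ d := by
    filter_upwards [eventually_ge_atTop 1, hFev'] with k hk1 hFk
    set mk := k / p + c with hmk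
    have hmk1 : 1 ≤ mk := hmk ▸ hc1.trans (Nat.le_add_left c (k / p))
    have hkpos : (0:ℝ) < (k:ℝ) := by exact_mod_cast hk1
    have hmkpos : (0:ℝ) < (mk:ℝ) := by exact_mod_cast hmk1
    -- monotonicity step
    have hfin : hgt R (M ⧸ ((𝓘.I p) ^ mk • ⊤ : Submodule R M)) ≠ ⊤ := by
      intro htop
      have := hlen p mk hp1 hmk1
      rw [htop] at this
      exact (ENat.coe_ne_top _) (top_le_iff.mp this)
    have hmono : modLength R (M ⧸ (𝓘.I k • (⊤ : Submodule R M)))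
        ≤ modLength R (M ⧸ ((𝓘.I p) ^ mk • (⊤ : Submodule R M))) :=
      modLength_mono (hgt_quot_mono (hkey k hk1)) hfin
    have hgk : g k ≤ F mk * ((mk : ℝ) ^ d / (k : ℝ) ^ d) := by
      simp only [hg, hF]
      have : (Nat.factorial d : ℝ) * modLength R (M ⧸ ((𝓘.I p) ^ mk • (⊤ : Submodule R M)))
          / (mk : ℝ) ^ d * ((mk : ℝ) ^ d / (k : ℝ) ^ d)
          = (Nat.factorial d : ℝ) * modLength R (M ⧸ ((𝓘.I p) ^ mk • (⊤ : Submodule R M)))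
          / (k : ℝ) ^ d := by
        field_simp
      rw [this]
      apply div_le_div_of_nonneg_right _ (by positivity)
      exact mul_le_mul_of_nonneg_left hmono (by positivity)
    have hratio : (mk : ℝ) ^ d / (k : ℝ) ^ d ≤ ((1:ℝ) / p + c / k) ^ d := by
      have hmkle : (mk : ℝ) ≤ (k : ℝ) / p + c := by
        rw [hmk]
        push_cast
        have := Nat.cast_div_le (m := k) (n := p) (α := ℝ)
        linarith
      have h2 : (mk : ℝ) / k ≤ (1:ℝ) / p + c / k := by
        rw [div_le_iff₀ hkpos]
        have hppos : (0:ℝ) < (p:ℝ) := by exact_mod_cast hp1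
        calc (mk : ℝ) ≤ (k : ℝ) / p + c := hmkle
          _ = ((1:ℝ) / p + c / k) * k := by field_simp
      calc (mk : ℝ) ^ d / (k : ℝ) ^ d = ((mk : ℝ) / k) ^ d := by rw [div_pow]
        _ ≤ ((1:ℝ) / p + c / k) ^ d := by
            apply pow_le_pow_left₀ (by positivity) h2
    calc g k ≤ F mk * ((mk : ℝ) ^ d / (k : ℝ) ^ d) := hgk
      _ ≤ (E + δ) * ((mk : ℝ) ^ d / (k : ℝ) ^ d) :=
          mul_le_mul_of_nonneg_right hFk.le (by positivity)
      _ ≤ (E + δ) * ((1:ℝ) / p + c / k) ^ d :=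
          mul_le_mul_of_nonneg_left hratio (by linarith)
  -- conclusion
  have hfinal : ∀ᶠ k in atTop, g k ≤ L + ε := by
    filter_upwards [hptwise, hhev] with k h1 h2
    have hppos : (0:ℝ) < (p:ℝ) := by exact_mod_cast hp1
    have hpd : ((1:ℝ) / p) ^ d ≤ 1 := by
      apply pow_le_one₀ (by positivity)
      rw [div_le_one hppos]
      exact_mod_cast hp1
    have hEp : (E + δ) * ((1:ℝ) / p) ^ d ≤ E / (p:ℝ) ^ d + δ := by
      have : (E + δ) * ((1:ℝ) / p) ^ d = E * ((1:ℝ)/p)^d + δ * ((1:ℝ)/p)^d := by ring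
      rw [this]
      have h3 : E * ((1:ℝ)/p)^d = E / (p:ℝ)^d := by
        rw [div_pow, one_pow]
        ring
      rw [h3]
      have : δ * ((1:ℝ)/p)^d ≤ δ := by
        calc δ * ((1:ℝ)/p)^d ≤ δ * 1 := mul_le_mul_of_nonneg_left hpd hδpos.le
          _ = δ := mul_one δ
      linarith
    have : E / (p:ℝ) ^ d < L + ε / 2 := hpe
    calc g k ≤ (E + δ) * ((1:ℝ) / p + c / k) ^ d := h1
      _ ≤ (E + δ) * ((1:ℝ) / p) ^ d + δ := h2
      _ ≤ E / (p:ℝ) ^ d + δ + δ := by linarith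
      _ ≤ L + ε / 2 + δ + δ := by linarith
      _ = L + ε := by rw [hδ]; ring
  have hbd : IsBoundedUnder (· ≥ ·) atTop g := ⟨0, by
    rw [eventually_map]; exact Eventually.of_forall hg0⟩
  exact limsup_le_of_le hbd.isCoboundedUnder_le hfinal
end

section
/- Let R be a d-dimensional Noetherian local ring and 𝓘 = {I_n}, 𝓙 = {J_n} graded m_R-families. Then the Minkowski inequality e(𝓘𝓙)^{1/d} ≤ e(𝓘)^{1/d} + e(𝓙)^{1/d} holds, where (𝓘𝓙)_n = I_n J_n, granted that the Minkowski inequality e(IJ)^{1/d} ≤ e(I)^{1/d} + e(J)^{1/d} holds for m_R-primary ideals I, J. -/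
open Filter IsLocalRing Topology

lemma hsMult_nonneg (d : ℕ) {R : Type*} [CommRing R] (I : Ideal R) : 0 ≤ hsMult d I := by
  unfold hsMult
  rw [Filter.limsup_eq]
  apply Real.sInf_nonneg
  intro a ha
  obtain ⟨n, hn⟩ := ha.exists
  refine le_trans ?_ hn
  have : (0:ℝ) ≤ modLength R (R ⧸ I ^ n) := Nat.cast_nonneg _
  positivity

/-- Minkowski inequality for graded families.  Let `R` be a
`d`-dimensional Noetherian local ring and `𝓘`, `𝓙` graded `m_R`-families.  Granted the
Minkowski inequality `e(IJ)^{1/d} ≤ e(I)^{1/d} + e(J)^{1/d}` for `m_R`-primary ideals, one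
has `e(𝓘𝓙)^{1/d} ≤ e(𝓘)^{1/d} + e(𝓙)^{1/d}`, where `(𝓘𝓙)_n = I_n J_n`. -/
theorem minkowski_inequality_graded_families
    {R : Type*} [CommRing R] [IsLocalRing R] [IsNoetherianRing R] (d : ℕ)
    (hd : ringKrullDim R = d)
    (hideal : ∀ I J : Ideal R,
      ((∃ k : ℕ, maximalIdeal R ^ k ≤ I) ∧ I ≤ maximalIdeal R) →
      ((∃ k : ℕ, maximalIdeal R ^ k ≤ J) ∧ J ≤ maximalIdeal R) →
      hsMult d (I * J) ^ ((1 : ℝ) / d) ≤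
        hsMult d I ^ ((1 : ℝ) / d) + hsMult d J ^ ((1 : ℝ) / d))
    (𝓘 𝓙 : GradedFamily R) (eI eJ eIJ : ℝ)
    (heI : Tendsto (fun n : ℕ => hsMult d (𝓘.I n) / (n : ℝ) ^ d) atTop (nhds eI))
    (heJ : Tendsto (fun n : ℕ => hsMult d (𝓙.I n) / (n : ℝ) ^ d) atTop (nhds eJ))
    (heIJ : Tendsto (fun n : ℕ => hsMult d (𝓘.I n * 𝓙.I n) / (n : ℝ) ^ d) atTop
      (nhds eIJ)) :
    eIJ ^ ((1 : ℝ) / d) ≤ eI ^ ((1 : ℝ) / d) + eJ ^ ((1 : ℝ) / d) := by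
  rcases Nat.eq_zero_or_pos d with hd0 | hd0
  · subst hd0
    norm_num
  have hp : (0:ℝ) < 1 / d := by positivity
  have cont : ∀ x : ℝ, ContinuousAt (fun y : ℝ => y ^ ((1:ℝ)/d)) x := fun x =>
    Real.continuousAt_rpow_const x _ (Or.inr hp.le)
  have tI := ((cont eI).tendsto).comp heI
  have tJ := ((cont eJ).tendsto).comp heJ
  have tIJ := ((cont eIJ).tendsto).comp heIJ
  refine le_of_tendsto_of_tendsto tIJ (tI.add tJ) ?_
  filter_upwards [eventually_ge_atTop 1] with n hn
  have hn0 : 0 < n := hn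
  have hnr : (0:ℝ) < (n:ℝ) := by exact_mod_cast hn0
  have key := hideal (𝓘.I n) (𝓙.I n) (𝓘.primary n hn0) (𝓙.primary n hn0)
  have hnd : (((n:ℝ) ^ d) ^ ((1:ℝ)/d)) = (n:ℝ) := by
    rw [← Real.rpow_natCast (n:ℝ) d, ← Real.rpow_mul hnr.le,
      mul_one_div_cancel (by exact_mod_cast hd0.ne' : (d:ℝ) ≠ 0), Real.rpow_one]
  simp only [Function.comp]
  rw [Real.div_rpow (hsMult_nonneg d _) (by positivity),
    Real.div_rpow (hsMult_nonneg d _) (by positivity),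
    Real.div_rpow (hsMult_nonneg d _) (by positivity), hnd, ← add_div]
  exact div_le_div_of_nonneg_right key hnr.le |>.trans_eq rfl
end

section
/- Let R be a Noetherian local ring of dimension d and 𝓘 = {I_n} a real divisorial filtration defined by valuations v_1,…,v_r ∈ V(R) and real numbers a_1,…,a_r ≥ 0, i.e. I_n = {f ∈ R : v_i(f) ≥ n·a_i for 1 ≤ i ≤ r}. Then 𝓘 equals its saturation: 𝓘 = 𝓘̃, where Ĩ_n = {f ∈ m_R : v(f) ≥ n·v(𝓘) for all v ∈ V(R)} and v(𝓘) = inf_{m>0} v(I_m)/m. -/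
open Filter IsLocalRing Topology
open scoped ENNReal

/-- An `m_R`-valuation of the local ring `R`: an additive `ℝ≥0∞`-valued valuation which is
positive on the maximal ideal and whose value group is `ℤ` (encoded by taking values in
`ℕ ∪ {∞}` and attaining every natural number). -/
structure MRValuation (R : Type*) [CommRing R] [IsLocalRing R] where
  v : R → ℝ≥0∞
  map_zero : v 0 = ⊤
  map_one : v 1 = 0
  map_mul : ∀ a b : R, v (a * b) = v a + v b
  min_le_map_add : ∀ a b : R, min (v a) (v b) ≤ v (a + b)
  pos_of_mem_maximalIdeal : ∀ f ∈ maximalIdeal R, 0 < v f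
  integer_valued : ∀ f : R, v f = ⊤ ∨ ∃ n : ℕ, v f = n
  value_group_int : ∀ n : ℕ, ∃ f : R, v f = n

/-- `v(𝓘) = inf_{m > 0} v(I_m)/m`, where `v(I) = inf {v f : f ∈ I}`. -/
noncomputable def valFam {R : Type*} [CommRing R] [IsLocalRing R]
    (w : MRValuation R) (I : ℕ → Ideal R) : ℝ≥0∞ :=
  ⨅ (m : ℕ) (_ : 0 < m), (⨅ f ∈ I m, w.v f) / (m : ℝ≥0∞)

/-- The `n`-th saturation ideal `Ĩ_n = {f ∈ m_R : v(f) ≥ n·v(𝓘) for all m_R-valuations v}`. -/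
def satSet {R : Type*} [CommRing R] [IsLocalRing R] (I : ℕ → Ideal R) (n : ℕ) : Set R :=
  {f : R | f ∈ maximalIdeal R ∧ ∀ w : MRValuation R, (n : ℝ≥0∞) * valFam w I ≤ w.v f}


/-- Let `R` be a Noetherian local ring and `𝓘 = {I_n}` a real divisorial
filtration: `I_n = {f ∈ R : v_i(f) ≥ n·a_i, 1 ≤ i ≤ r}` for `v_1, …, v_r ∈ V(R)` and real
`a_1, …, a_r ≥ 0` (being a filtration by `m_R`-primary ideals, `I_n ⊆ m_R` for `n > 0`).
Then `𝓘` equals its saturation `𝓘̃`, with `Ĩ_n = {f ∈ m_R : v(f) ≥ n·v(𝓘) ∀ v ∈ V(R)}`. -/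
theorem divisorial_filtration_saturated
    {R : Type*} [CommRing R] [IsLocalRing R] [IsNoetherianRing R] (d : ℕ)
    (hd : ringKrullDim R = d) (r : ℕ) (v : Fin r → MRValuation R)
    (a : Fin r → ℝ) (ha : ∀ i, 0 ≤ a i) (I : ℕ → Ideal R)
    (hI : ∀ n : ℕ, (I n : Set R) =
      {f : R | ∀ i : Fin r, ENNReal.ofReal ((n : ℝ) * a i) ≤ (v i).v f})
    (hprimary : ∀ n : ℕ, 0 < n → I n ≤ maximalIdeal R) :
    ∀ n : ℕ, 0 < n → (I n : Set R) = satSet I n := by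
  intro n hn
  have hn0 : (n : ℝ≥0∞) ≠ 0 := by exact_mod_cast hn.ne'
  have hnt : (n : ℝ≥0∞) ≠ ⊤ := ENNReal.natCast_ne_top n
  ext f
  constructor
  · intro hf
    refine ⟨hprimary n hn hf, fun w => ?_⟩
    have h1 : valFam w I ≤ (⨅ g ∈ I n, w.v g) / (n : ℝ≥0∞) := by
      exact iInf_le_of_le n (iInf_le _ hn)
    have h2 : (⨅ g ∈ I n, w.v g) ≤ w.v f := iInf_le_of_le f (iInf_le _ hf)
    calc (n : ℝ≥0∞) * valFam w I ≤ (n : ℝ≥0∞) * ((⨅ g ∈ I n, w.v g) / (n : ℝ≥0∞)) :=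
          mul_le_mul_right h1 _
      _ ≤ (n : ℝ≥0∞) * (w.v f / (n : ℝ≥0∞)) :=
          mul_le_mul_right (ENNReal.div_le_div_right h2 _) _
      _ = w.v f := ENNReal.mul_div_cancel hn0 hnt
  · intro hf
    have hf2 := hf.2
    rw [hI n]
    intro i
    have key : ENNReal.ofReal (a i) ≤ valFam (v i) I := by
      refine le_iInf fun m => le_iInf fun hm => ?_
      have hm0 : (m : ℝ≥0∞) ≠ 0 := by exact_mod_cast hm.ne'
      have hmt : (m : ℝ≥0∞) ≠ ⊤ := ENNReal.natCast_ne_top m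
      rw [ENNReal.le_div_iff_mul_le (Or.inl hm0) (Or.inl hmt)]
      refine le_iInf fun g => le_iInf fun hg => ?_
      have := (Set.ext_iff.mp (hI m) g).mp hg i
      calc ENNReal.ofReal (a i) * (m : ℝ≥0∞)
          = ENNReal.ofReal ((m : ℝ) * a i) := by
            rw [ENNReal.ofReal_mul (by positivity), ENNReal.ofReal_natCast, mul_comm]
        _ ≤ (v i).v g := this
    have := hf2 (v i)
    calc ENNReal.ofReal ((n : ℝ) * a i)
        = (n : ℝ≥0∞) * ENNReal.ofReal (a i) := by
          rw [ENNReal.ofReal_mul (by positivity), ENNReal.ofReal_natCast]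
      _ ≤ (n : ℝ≥0∞) * valFam (v i) I := mul_le_mul_right key _
      _ ≤ (v i).v f := this
end

section
/- Let a_1,…,a_r > 0 and suppose for each i we have nonnegative reals e(i)_0,…,e(i)_d satisfying the log-concavity inequalities e(i)_j² ≤ e(i)_{j−1}e(i)_{j+1} for 1 ≤ j ≤ d−1. Set e_j = Σ_i a_i e(i)_j and suppose there is ξ > 0 with e_{j+1} = ξ e_j for all 0 ≤ j ≤ d−1. Then for each i and each 1 < j < d: e(i)_{j+1}^{1/2} = ξ · e(i)_{j−1}^{1/2} and e(i)_j² = e(i)_{j−1} e(i)_{j+1}. Consequently, for each i, either e(i)_j = 0 for all j, or e(i)_j > 0 for all j and e(i)_{j+1}/e(i)_j = ξ for all j. -/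
/-!
Log-concavity gives, for each component,
`e_{j+1} - 2ξ e_j + ξ² e_{j-1} ≥ (√e_{j+1} - ξ √e_{j-1})² ≥ 0`,
while the weighted sum of the left-hand sides vanishes because the weighted sums `E_j` are
geometric with ratio `ξ`. Positive weights force every left-hand side, hence every square, to
vanish, so each component is itself geometric with ratio `ξ`.
-/

theorem sq_sqrt_sub_mul_sqrt_le {x y z ξ : ℝ} (hx : 0 ≤ x) (hz : 0 ≤ z)
    (hy : y ^ 2 ≤ x * z) (hξ : 0 ≤ ξ) :
    (√z - ξ * √x) ^ 2 ≤ z - 2 * ξ * y + ξ ^ 2 * x := by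
  have hy' : y ≤ √x * √z :=
    calc y ≤ |y| := le_abs_self y
      _ = √(y ^ 2) := (Real.sqrt_sq_eq_abs y).symm
      _ ≤ √(x * z) := Real.sqrt_le_sqrt hy
      _ = √x * √z := Real.sqrt_mul hx z
  calc (√z - ξ * √x) ^ 2 = z - 2 * ξ * (√x * √z) + ξ ^ 2 * x := by
        rw [sub_sq, mul_pow, Real.sq_sqrt hx, Real.sq_sqrt hz]; ring
    _ ≤ z - 2 * ξ * y + ξ ^ 2 * x := by gcongr

theorem eq_mul_and_eq_sq_mul_of_sq_le {x y z ξ : ℝ} (hx : 0 ≤ x) (hz : 0 ≤ z)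
    (hy : y ^ 2 ≤ x * z) (hξ : 0 < ξ) (h : z - 2 * ξ * y + ξ ^ 2 * x = 0) :
    y = ξ * x ∧ z = ξ ^ 2 * x := by
  have hsqrt : √z = ξ * √x := by
    have hsq := sq_sqrt_sub_mul_sqrt_le hx hz hy hξ.le
    rw [h] at hsq
    exact sub_eq_zero.mp (pow_eq_zero_iff two_ne_zero |>.mp (le_antisymm hsq (sq_nonneg _)))
  have hz' : z = ξ ^ 2 * x := by
    rw [← Real.sq_sqrt hz, hsqrt, mul_pow, Real.sq_sqrt hx]
  refine ⟨mul_left_cancel₀ (by positivity : 2 * ξ ≠ 0) ?_, hz'⟩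
  linear_combination hz' - h

theorem eq_mul_and_eq_sq_mul_of_weighted_sum {ι : Type*} [Fintype ι] {a x y z : ι → ℝ} {ξ : ℝ}
    (ha : ∀ i, 0 < a i) (hx : ∀ i, 0 ≤ x i) (hz : ∀ i, 0 ≤ z i)
    (hy : ∀ i, y i ^ 2 ≤ x i * z i) (hξ : 0 < ξ)
    (hxy : ∑ i, a i * y i = ξ * ∑ i, a i * x i) (hyz : ∑ i, a i * z i = ξ * ∑ i, a i * y i)
    (i : ι) : y i = ξ * x i ∧ z i = ξ ^ 2 * x i := by
  set q : ι → ℝ := fun i ↦ z i - 2 * ξ * y i + ξ ^ 2 * x i with hq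
  have hq_nonneg (i : ι) : 0 ≤ q i :=
    (sq_nonneg _).trans (sq_sqrt_sub_mul_sqrt_le (hx i) (hz i) (hy i) hξ.le)
  have hsum : ∑ i, a i * q i = 0 :=
    calc ∑ i, a i * q i
        = ∑ i, a i * z i - 2 * ξ * ∑ i, a i * y i + ξ ^ 2 * ∑ i, a i * x i := by
          simp only [hq, Finset.mul_sum, ← Finset.sum_sub_distrib, ← Finset.sum_add_distrib]
          exact Finset.sum_congr rfl fun i _ ↦ by ring
      _ = 0 := by rw [hyz, hxy]; ring
  have hqi : a i * q i = 0 :=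
    (Finset.sum_eq_zero_iff_of_nonneg fun j _ ↦ mul_nonneg (ha j).le (hq_nonneg j)).mp hsum i
      (Finset.mem_univ i)
  exact eq_mul_and_eq_sq_mul_of_sq_le (hx i) (hz i) (hy i) hξ
    ((mul_eq_zero.mp hqi).resolve_left (ha i).ne')

theorem eq_pow_mul_of_forall_lt_succ_eq_mul {M : Type*} [Monoid M] {f : ℕ → M} {c : M} {d : ℕ}
    (hf : ∀ k, k < d → f (k + 1) = c * f k) : ∀ j, j ≤ d → f j = c ^ j * f 0
  | 0, _ => by rw [pow_zero, one_mul]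
  | j + 1, hj => by
    rw [hf j (by omega), eq_pow_mul_of_forall_lt_succ_eq_mul hf j (by omega), pow_succ', mul_assoc]

/-- Let `a_1, …, a_r > 0` and, for each `i`, nonnegative reals
`e(i)_0, …, e(i)_d` satisfying log-concavity `e(i)_j² ≤ e(i)_{j−1} e(i)_{j+1}` for
`1 ≤ j ≤ d−1`.  Set `E_j = Σ_i a_i e(i)_j` and suppose `ξ > 0` satisfies `E_{j+1} = ξ E_j`
for all `0 ≤ j ≤ d−1`.  Then for each `i` and each `1 < j < d`:
`√(e(i)_{j+1}) = ξ √(e(i)_{j−1})` and `e(i)_j² = e(i)_{j−1} e(i)_{j+1}`.  Consequently,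
for each `i`, either `e(i)_j = 0` for all `j ≤ d`, or `e(i)_j > 0` for all `j ≤ d` and
`e(i)_{j+1} = ξ e(i)_j` for all `j < d`. -/
theorem componentwise_geometric_lemma
    (d : ℕ) (hd : 2 ≤ d) (r : ℕ) (a : Fin r → ℝ) (ha : ∀ i, 0 < a i)
    (e : Fin r → ℕ → ℝ) (hnonneg : ∀ i j, j ≤ d → 0 ≤ e i j)
    (hlogconcave : ∀ (i : Fin r) (j : ℕ), 1 ≤ j → j ≤ d - 1 →
      e i j ^ 2 ≤ e i (j - 1) * e i (j + 1))
    (ξ : ℝ) (hξ : 0 < ξ)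
    (hgeo : ∀ j : ℕ, j < d → (∑ i, a i * e i (j + 1)) = ξ * ∑ i, a i * e i j) :
    (∀ (i : Fin r) (j : ℕ), 1 < j → j < d →
      Real.sqrt (e i (j + 1)) = ξ * Real.sqrt (e i (j - 1)) ∧
      e i j ^ 2 = e i (j - 1) * e i (j + 1)) ∧
    (∀ i : Fin r, (∀ j, j ≤ d → e i j = 0) ∨
      ((∀ j, j ≤ d → 0 < e i j) ∧ ∀ j, j < d → e i (j + 1) = ξ * e i j)) := by
  have hpair (i : Fin r) (k : ℕ) (hk : k + 2 ≤ d) :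
      e i (k + 1) = ξ * e i k ∧ e i (k + 1 + 1) = ξ ^ 2 * e i k :=
    eq_mul_and_eq_sq_mul_of_weighted_sum ha (fun i ↦ hnonneg i k (by omega))
      (fun i ↦ hnonneg i (k + 1 + 1) (by omega))
      (fun i ↦ by simpa using hlogconcave i (k + 1) (by omega) (by omega)) hξ
      (hgeo k (by omega)) (hgeo (k + 1) (by omega)) i
  have hstep (i : Fin r) (k : ℕ) (hk : k < d) : e i (k + 1) = ξ * e i k := by
    rcases Nat.lt_or_ge (k + 1) d with hk' | hk'
    · exact (hpair i k hk').1
    · obtain ⟨m, rfl⟩ : ∃ m, k = m + 1 := ⟨k - 1, by omega⟩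
      obtain ⟨h1, h2⟩ := hpair i m (by omega)
      rw [h2, h1]; ring
  refine ⟨fun i j hj1 hjd ↦ ?_, fun i ↦ ?_⟩
  · obtain ⟨k, rfl⟩ : ∃ k, j = k + 1 := ⟨j - 1, by omega⟩
    obtain ⟨h1, h2⟩ := hpair i k (by omega)
    rw [Nat.add_sub_cancel, h1, h2, Real.sqrt_mul' _ (hnonneg i k (by omega)),
      Real.sqrt_sq hξ.le]
    exact ⟨rfl, by ring⟩
  · have hgeom := eq_pow_mul_of_forall_lt_succ_eq_mul (hstep i)
    rcases (hnonneg i 0 (by omega)).eq_or_lt with h0 | h0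
    · exact .inl fun j hj ↦ by rw [hgeom j hj, ← h0, mul_zero]
    · exact .inr ⟨fun j hj ↦ hgeom j hj ▸ by positivity, hstep i⟩
end

section
/- Let R be a Noetherian local ring, P a prime ideal of the m_R-adic completion R̂ with P ∩ R = (0) (so R is a domain), and w a rank 1 valuation on the quotient field of R̂/P which is nonnegative on R̂/P and positive on the maximal ideal. Let v be the restriction of w to R. Then for every g ∈ R̂/P with w(g) < ∞ there exists f ∈ R with w(f − g) > w(g) and v(f) = w(g); consequently v and w have the same value group, and the residue field of v equals the residue field of w. -/
open IsLocalRing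
open scoped ENNReal

namespace Statement19Aux

open AdicCompletion

variable {R : Type*} [CommRing R] [IsNoetherianRing R] (I : Ideal R)

lemma mem_map_of_val_eq_zero (n : ℕ) (x : AdicCompletion I R) (hx : x.val n = 0) :
    x ∈ Ideal.map (algebraMap R (AdicCompletion I R)) (I ^ n) := by
  classical
  set S : Submodule R R := (I ^ n • ⊤ : Ideal R) with hS
  have hSle : ∀ r : R, r ∈ S → r ∈ I ^ n := by
    intro r hr
    simpa [hS, smul_eq_mul, Ideal.mul_top] using hr
  have hfg := LinearMap.exact_subtype_mkQ S
  have hexact := AdicCompletion.map_exact (I := I) (Submodule.injective_subtype S) hfg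
    (Submodule.mkQ_surjective S)
  have hx0 : AdicCompletion.map I S.mkQ x = 0 := by
    apply AdicCompletion.ext
    intro m
    obtain ⟨c, hc⟩ := Submodule.Quotient.mk_surjective _ (x.val (max m n))
    have hcS : c ∈ S := by
      have h1 := transitionMap_comp_eval_apply I R (le_max_right m n) x
      rw [← hc] at h1
      change Submodule.Quotient.mk c = _ at h1
      rw [← Submodule.Quotient.mk_eq_zero, h1]
      exact hx
    have h2 := transitionMap_comp_eval_apply I (R ⧸ S) (le_max_left m n)
      (AdicCompletion.map I S.mkQ x)
    rw [← h2]
    have h3 : (AdicCompletion.map I S.mkQ x).val (max m n) = 0 := by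
      rw [map_val_apply, ← hc, LinearMap.reduceModIdeal_apply]
      have : S.mkQ c = 0 := (Submodule.Quotient.mk_eq_zero S).mpr hcS
      rw [this]
      simp
    rw [h3]
    simp
  obtain ⟨y, hy⟩ := (hexact x).mp hx0
  have : Module.Finite R S := Module.Finite.iff_fg.mpr (IsNoetherian.noetherian S)
  obtain ⟨k, π, hπ⟩ := Module.Finite.exists_fin' R S
  obtain ⟨u, hu⟩ := AdicCompletion.map_surjective I hπ y
  set h : (Fin k → R) →ₗ[R] R := S.subtype ∘ₗ π with hh
  have hx' : x = AdicCompletion.map I h u := by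
    rw [← hy, ← hu, AdicCompletion.map_comp_apply]
  set a : Fin k → R := fun i => h fun j => if i = j then 1 else 0 with ha
  have haI : ∀ i, a i ∈ I ^ n := by
    intro i
    exact hSle _ (π _).2
  have hdecomp : x = ∑ i, a i • (AdicCompletion.map I (LinearMap.proj i) u) := by
    rw [hx']
    apply AdicCompletion.ext
    intro m
    obtain ⟨c, hc⟩ := Submodule.Quotient.mk_surjective _ (u.val m)
    have hval : ∀ i, (a i • AdicCompletion.map I (LinearMap.proj i) u).val m =
        Submodule.Quotient.mk (a i * c i) := by
      intro i
      rw [val_smul_apply, map_val_apply, ← hc, LinearMap.reduceModIdeal_apply,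
        ← Submodule.Quotient.mk_smul]
      rfl
    have hrhs : (∑ i, a i • AdicCompletion.map I (LinearMap.proj i) u).val m =
        Submodule.Quotient.mk (∑ i, a i * c i) := by
      rw [val_sum_apply]
      simp_rw [hval, ← Submodule.mkQ_apply, ← map_sum]
    rw [hrhs, map_val_apply, ← hc, LinearMap.reduceModIdeal_apply]
    congr 1
    rw [LinearMap.pi_apply_eq_sum_univ h c]
    exact Finset.sum_congr rfl fun i _ => mul_comm _ _
  rw [hdecomp]
  refine Submodule.sum_mem _ fun i _ => ?_
  rw [Algebra.smul_def]
  exact Ideal.mul_mem_right _ _ (Ideal.mem_map_of_mem _ (haI i))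

lemma exists_approx (x : AdicCompletion I R) (n : ℕ) :
    ∃ f : R, x - algebraMap R (AdicCompletion I R) f ∈
      Ideal.map (algebraMap R (AdicCompletion I R)) (I ^ n) := by
  obtain ⟨f, hf⟩ := Submodule.Quotient.mk_surjective _ (x.val n)
  refine ⟨f, mem_map_of_val_eq_zero I n _ ?_⟩
  rw [val_sub_apply]
  have : (algebraMap R (AdicCompletion I R) f).val n = Submodule.Quotient.mk f := rfl
  rw [this, hf, sub_self]

end Statement19Aux

set_option maxHeartbeats 2000000 in
set_option synthInstance.maxHeartbeats 1000000 in
/-- Let `R` be a Noetherian local domain, `P` a prime of the `m_R`-adic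
completion `R̂` with `P ∩ R = (0)`, and `w` a rank-1 (additive, `ℝ≥0∞`-valued) valuation on
`R̂/P` (the restriction to `R̂/P` of a rank-1 valuation of its quotient field, nonnegative on
`R̂/P`, positive on the maximal ideal, with `w(g) = ∞` iff `g = 0`).  Let `v = w ∘ φ` be the
restriction to `R`, where `φ : R → R̂/P`.  Then for every `g` with `w(g) < ∞` there is
`f ∈ R` with `w(φ(f) − g) > w(g)` and `v(f) = w(g)`; consequently `v` and `w` take the same
(finite) values — hence have the same value group — and (taking `w(g) = 0`) every residue of
`w` is the residue of an element of `R`, so `v` and `w` have the same residue field. -/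
theorem valuation_restriction_to_ring
    {R : Type*} [CommRing R] [IsLocalRing R] [IsNoetherianRing R] [IsDomain R]
    (P : Ideal (AdicCompletion (maximalIdeal R) R)) (hP : P.IsPrime)
    (φ : R →+* AdicCompletion (maximalIdeal R) R ⧸ P)
    (hφ : φ = (Ideal.Quotient.mk P).comp
      (algebraMap R (AdicCompletion (maximalIdeal R) R)))
    (hker : ∀ f : R, φ f = 0 → f = 0)
    (w : (AdicCompletion (maximalIdeal R) R ⧸ P) → ℝ≥0∞)
    (hw_zero : ∀ g, w g = ⊤ ↔ g = 0)
    (hw_one : w 1 = 0)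
    (hw_mul : ∀ g h, w (g * h) = w g + w h)
    (hw_add : ∀ g h, min (w g) (w h) ≤ w (g + h))
    (hw_pos : ∀ f ∈ maximalIdeal R, 0 < w (φ f)) :
    (∀ g : AdicCompletion (maximalIdeal R) R ⧸ P, w g < ⊤ →
      ∃ f : R, w g < w (φ f - g) ∧ w (φ f) = w g) ∧
    {c : ℝ≥0∞ | c ≠ ⊤ ∧ ∃ g : AdicCompletion (maximalIdeal R) R ⧸ P, w g = c} =
      {c : ℝ≥0∞ | c ≠ ⊤ ∧ ∃ f : R, w (φ f) = c} := by
  classical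
  -- negation does not change the valuation
  have hwm1 : w (-1) = 0 := by
    have h := hw_mul (-1) (-1)
    rw [neg_mul_neg, one_mul, hw_one] at h
    have h2 : w (-1) ≤ 0 := by
      calc w (-1) ≤ w (-1) + w (-1) := le_add_self
        _ = 0 := h.symm
    exact le_antisymm h2 zero_le
  have wneg : ∀ z, w (-z) = w z := by
    intro z
    have h := hw_mul (-1) z
    rw [neg_one_mul, hwm1, zero_add] at h
    exact h
  -- a uniform positive lower bound for `w ∘ φ` on the maximal ideal
  obtain ⟨s, hs⟩ : (maximalIdeal R).FG := IsNoetherian.noetherian (maximalIdeal R)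
  set c : ℝ≥0∞ := (s.inf fun a => w (φ a)) ⊓ 1 with hcdef
  have hcT : c ≠ ⊤ := by
    intro h
    have : c ≤ 1 := inf_le_right
    rw [h] at this
    exact (lt_irrefl _ (lt_of_le_of_lt this (by simp)))
  have hc0 : 0 < c := by
    rw [hcdef, lt_inf_iff]
    refine ⟨?_, zero_lt_one⟩
    rw [Finset.lt_inf_iff (by simp : (0 : ℝ≥0∞) < ⊤)]
    intro b hb
    exact hw_pos b (hs ▸ Submodule.subset_span hb)
  have hcle : ∀ d ∈ maximalIdeal R, c ≤ w (φ d) := by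
    intro d hd
    rw [← hs] at hd
    induction hd using Submodule.span_induction with
    | mem b hb => exact le_trans inf_le_left (Finset.inf_le hb)
    | zero => rw [map_zero, (hw_zero 0).mpr rfl]; exact le_top
    | add x y _ _ hx hy => rw [map_add]; exact le_trans (le_min hx hy) (hw_add _ _)
    | smul r x _ hx => rw [smul_eq_mul, map_mul, hw_mul]; exact le_trans hx le_add_self
  -- lower bound on powers of the maximal ideal
  have hpow : ∀ (n : ℕ) (b : R), b ∈ (maximalIdeal R) ^ n →
      (n : ℝ≥0∞) * c ≤ w (φ b) := by
    intro n
    induction n with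
    | zero => intro b _; simp
    | succ n ih =>
      intro b hb
      rw [pow_succ] at hb
      refine Submodule.mul_induction_on hb ?_ ?_
      · intro p hp q hq
        rw [map_mul, hw_mul]
        push_cast
        rw [add_mul, one_mul]
        exact add_le_add (ih p hp) (hcle q hq)
      · intro p q hp hq
        rw [map_add]
        exact le_trans (le_min hp hq) (hw_add _ _)
  -- lower bound on the ideal generated in the quotient
  have hideal : ∀ (n : ℕ) (y : AdicCompletion (maximalIdeal R) R ⧸ P),
      y ∈ Ideal.map φ ((maximalIdeal R) ^ n) → (n : ℝ≥0∞) * c ≤ w y := by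
    intro n y hy
    have hy' : y ∈ Ideal.span (φ '' ((maximalIdeal R) ^ n : Ideal R)) := hy
    clear hy
    induction hy' using Submodule.span_induction with
    | mem b hb =>
      obtain ⟨p, hp, rfl⟩ := hb
      exact hpow n p hp
    | zero => rw [(hw_zero 0).mpr rfl]; exact le_top
    | add x y _ _ hx hy => exact le_trans (le_min hx hy) (hw_add _ _)
    | smul r x _ hx => rw [smul_eq_mul, hw_mul]; exact le_trans hx le_add_self
  -- the main approximation statement
  have main : ∀ g : AdicCompletion (maximalIdeal R) R ⧸ P, w g < ⊤ →
      ∃ f : R, w g < w (φ f - g) ∧ w (φ f) = w g := by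
    intro g hg
    obtain ⟨n, hn⟩ := ENNReal.exists_nat_gt
      (show w g / c ≠ ⊤ from (ENNReal.div_lt_top hg.ne hc0.ne').ne)
    have hng : w g < (n : ℝ≥0∞) * c :=
      (ENNReal.div_lt_iff (Or.inl hc0.ne') (Or.inl hcT)).mp hn
    obtain ⟨x, hx⟩ := Ideal.Quotient.mk_surjective (I := P) g
    obtain ⟨f, hf⟩ := Statement19Aux.exists_approx (maximalIdeal R) x n
    have hmem : g - φ f ∈ Ideal.map φ ((maximalIdeal R) ^ n) := by
      have h1 : Ideal.Quotient.mk P (x - algebraMap R _ f) ∈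
          Ideal.map (Ideal.Quotient.mk P)
            (Ideal.map (algebraMap R (AdicCompletion (maximalIdeal R) R))
              ((maximalIdeal R) ^ n)) :=
        Ideal.mem_map_of_mem _ hf
      rw [Ideal.map_map] at h1
      have h2 : Ideal.Quotient.mk P (x - algebraMap R _ f) =
          g - ((Ideal.Quotient.mk P).comp
            (algebraMap R (AdicCompletion (maximalIdeal R) R))) f := by
        rw [map_sub, hx]; rfl
      rw [hφ]
      exact h2 ▸ h1
    have hb : (n : ℝ≥0∞) * c ≤ w (g - φ f) := hideal n _ hmem
    have hgt : w g < w (g - φ f) := hng.trans_le hb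
    have hneg : w (φ f - g) = w (g - φ f) := by rw [← neg_sub, wneg]
    have hle1 : w g ≤ w (φ f) := by
      have h := hw_add (φ f - g) g
      rw [sub_add_cancel] at h
      have hmin : min (w (φ f - g)) (w g) = w g :=
        min_eq_right (by rw [hneg]; exact hgt.le)
      rw [hmin] at h
      exact h
    have hle2 : w (φ f) ≤ w g := by
      by_contra hlt
      push_neg at hlt
      have h := hw_add (φ f) (g - φ f)
      have heq : φ f + (g - φ f) = g := by ring
      rw [heq] at h
      exact absurd h (not_le.mpr (lt_min hlt hgt))
    exact ⟨f, by rw [hneg]; exact hgt, le_antisymm hle2 hle1⟩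
  refine ⟨main, ?_⟩
  apply Set.ext
  intro t
  simp only [Set.mem_setOf_eq]
  constructor
  · rintro ⟨ht, g, rfl⟩
    obtain ⟨f, _, hf⟩ := main g (lt_top_iff_ne_top.mpr ht)
    exact ⟨ht, f, hf⟩
  · rintro ⟨ht, f, rfl⟩
    exact ⟨ht, φ f, rfl⟩
end
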